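/- arXiv:1807.02426 — 4 statements merged into one kernel-verified Lean document; each statement's English description precedes it below -/
import Mathlib

section
/- For a Weyl integrable structure (V, g, dφ), the contracted Bianchi identity holds with respect to the Weyl connection: g^{μν} ∇_μ G_{νσ} = 0, where G is the (Weyl-invariant) Einstein tensor and ∇ the Weyl connection of (g, dφ). -/
open scoped BigOperators

/-- Partial derivative in the `a`-th coordinate direction. -/
noncomputable def pd {d : ℕ} (a : Fin d) (f : (Fin d → ℝ) → ℝ) (x : Fin d → ℝ) : ℝ :=
  fderiv ℝ f x (Pi.single a 1)

/-- Ricci tensor of a connection given by its Christoffel symbols. -/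
noncomputable def ricci {d : ℕ} (Γ : (Fin d → ℝ) → Fin d → Fin d → Fin d → ℝ)
    (x : Fin d → ℝ) (α β : Fin d) : ℝ :=
  (∑ μ, pd μ (fun y => Γ y μ α β) x) - (∑ μ, pd α (fun y => Γ y μ μ β) x)
    + (∑ μ, ∑ ν, Γ x μ μ ν * Γ x ν α β) - (∑ μ, ∑ ν, Γ x μ α ν * Γ x ν μ β)

/-- Einstein tensor `G_{αβ} = R_{αβ} - ½ g_{αβ} g^{μν}R_{μν}`. -/
noncomputable def einstein {d : ℕ}
    (g ginv : (Fin d → ℝ) → Fin d → Fin d → ℝ)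
    (Γ : (Fin d → ℝ) → Fin d → Fin d → Fin d → ℝ)
    (x : Fin d → ℝ) (α β : Fin d) : ℝ :=
  ricci Γ x α β - (1/2) * g x α β * ∑ μ, ∑ ν, ginv x μ ν * ricci Γ x μ ν

/-! ### pd calculus -/

theorem pd_congr {d : ℕ} {f h : (Fin d → ℝ) → ℝ} (a : Fin d) (hfh : ∀ y, f y = h y) (x) :
    pd a f x = pd a h x := by
  have : f = h := funext hfh
  rw [this]

theorem pd_const {d : ℕ} (a : Fin d) (c : ℝ) (x) : pd a (fun _ => c) x = 0 := by
  simp [pd]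

theorem pd_add {d : ℕ} {f h : (Fin d → ℝ) → ℝ} (a : Fin d) (x)
    (hf : DifferentiableAt ℝ f x) (hh : DifferentiableAt ℝ h x) :
    pd a (fun y => f y + h y) x = pd a f x + pd a h x := by
  simp [pd, fderiv_fun_add hf hh]

theorem pd_sub {d : ℕ} {f h : (Fin d → ℝ) → ℝ} (a : Fin d) (x)
    (hf : DifferentiableAt ℝ f x) (hh : DifferentiableAt ℝ h x) :
    pd a (fun y => f y - h y) x = pd a f x - pd a h x := by
  simp [pd, fderiv_fun_sub hf hh]

theorem pd_mul {d : ℕ} {f h : (Fin d → ℝ) → ℝ} (a : Fin d) (x)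
    (hf : DifferentiableAt ℝ f x) (hh : DifferentiableAt ℝ h x) :
    pd a (fun y => f y * h y) x = pd a f x * h x + f x * pd a h x := by
  simp [pd, fderiv_fun_mul hf hh]; ring

theorem pd_const_mul {d : ℕ} {f : (Fin d → ℝ) → ℝ} (a : Fin d) (c : ℝ) (x)
    (hf : DifferentiableAt ℝ f x) :
    pd a (fun y => c * f y) x = c * pd a f x := by
  simp [pd, fderiv_const_mul hf]

theorem pd_sum {d : ℕ} {ι : Type*} (s : Finset ι) {f : ι → (Fin d → ℝ) → ℝ} (a : Fin d) (x)
    (hf : ∀ i ∈ s, DifferentiableAt ℝ (f i) x) :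
    pd a (fun y => ∑ i ∈ s, f i y) x = ∑ i ∈ s, pd a (f i) x := by
  simp only [pd]
  rw [fderiv_fun_sum hf]
  simp

theorem contDiff_pd {d : ℕ} (a : Fin d) {f : (Fin d → ℝ) → ℝ} (hf : ContDiff ℝ (⊤ : ℕ∞) f) :
    ContDiff ℝ (⊤ : ℕ∞) (fun x => pd a f x) := by
  unfold pd
  exact (hf.fderiv_right (m := (⊤ : ℕ∞)) le_rfl).clm_apply contDiff_const

theorem ContDiff.dAt {d : ℕ} {f : (Fin d → ℝ) → ℝ} (hf : ContDiff ℝ (⊤ : ℕ∞) f) (x : Fin d → ℝ) :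
    DifferentiableAt ℝ f x := (hf.differentiable (by simp)).differentiableAt

theorem pd_comm {d : ℕ} (a b : Fin d) {f : (Fin d → ℝ) → ℝ} (hf : ContDiff ℝ (⊤ : ℕ∞) f) (x) :
    pd a (fun y => pd b f y) x = pd b (fun y => pd a f y) x := by
  unfold pd
  have hdf : Differentiable ℝ (fderiv ℝ f) :=
    (hf.fderiv_right (m := (⊤ : ℕ∞)) le_rfl).differentiable (by simp)
  have h1 : ∀ (v : Fin d → ℝ), fderiv ℝ (fun y => fderiv ℝ f y v) x
      = (fderiv ℝ (fderiv ℝ f) x).flip v := by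
    intro v
    have h2 := fderiv_clm_apply (hdf x) (differentiableAt_const v)
    simp only [fderiv_fun_const, Pi.zero_apply, ContinuousLinearMap.comp_zero, add_zero] at h2
    rw [h2]
    exact zero_add _
  rw [h1, h1]
  have hsymm := second_derivative_symmetric (f' := fderiv ℝ f) (f := f)
    (fun y => (hf.differentiable (by simp) y).hasFDerivAt) ((hdf x).hasFDerivAt)
    (Pi.single a 1) (Pi.single b 1)
  simpa using hsymm

/-- sum against a Kronecker delta -/
theorem sum_delta {d : ℕ} (c : Fin d) (f : Fin d → ℝ) :
    (∑ u, (if u = c then (1:ℝ) else 0) * f u) = f c := by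
  rw [Finset.sum_eq_single c] <;> simp +contextual

theorem sum_delta' {d : ℕ} (c : Fin d) (f : Fin d → ℝ) :
    (∑ u, (if c = u then (1:ℝ) else 0) * f u) = f c := by
  rw [Finset.sum_eq_single c] <;> simp +contextual [eq_comm]

theorem mul_delta_sum {d : ℕ} (c : Fin d) (f : Fin d → ℝ) :
    (∑ u, f u * (if u = c then (1:ℝ) else 0)) = f c := by
  rw [Finset.sum_eq_single c] <;> simp +contextual

theorem mul_delta_sum' {d : ℕ} (c : Fin d) (f : Fin d → ℝ) :
    (∑ u, f u * (if c = u then (1:ℝ) else 0)) = f c := by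
  rw [Finset.sum_eq_single c] <;> simp +contextual [eq_comm]


theorem sum_antisym_zero {d : ℕ} (F : Fin d → Fin d → ℝ) (h : ∀ u v, F u v + F v u = 0) :
    (∑ u, ∑ v, F u v) = 0 := by
  have h2 : ((∑ u, ∑ v, F u v) + (∑ u, ∑ v, F u v)) = 0 := by
    nth_rewrite 2 [show (∑ u, ∑ v, F u v) = ∑ u, ∑ v, F v u from Finset.sum_comm]
    rw [← Finset.sum_add_distrib]
    apply Finset.sum_eq_zero; intro u _
    rw [← Finset.sum_add_distrib]
    exact Finset.sum_eq_zero fun v _ => h u v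
  linarith


theorem sum2_sub_add {d : ℕ} (P Q R : Fin d → Fin d → ℝ) :
    (∑ u, ∑ v, (P u v - Q u v + R u v))
      = (∑ u, ∑ v, P u v) - (∑ u, ∑ v, Q u v) + (∑ u, ∑ v, R u v) := by
  simp [Finset.sum_sub_distrib, Finset.sum_add_distrib]


theorem sum3_13 {d : ℕ} (F : Fin d → Fin d → Fin d → ℝ) :
    (∑ a, ∑ b, ∑ c, F a b c) = ∑ c, ∑ b, ∑ a, F a b c := by
  rw [show (∑ a, ∑ b, ∑ c, F a b c) = ∑ a, ∑ c, ∑ b, F a b c from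
    Finset.sum_congr rfl fun a _ => Finset.sum_comm]
  rw [Finset.sum_comm]
  exact Finset.sum_congr rfl fun c _ => Finset.sum_comm

theorem sum3_rot {d : ℕ} (F : Fin d → Fin d → Fin d → ℝ) :
    (∑ a, ∑ b, ∑ c, F a b c) = ∑ c, ∑ a, ∑ b, F a b c := by
  rw [sum3_13]
  exact Finset.sum_congr rfl fun c _ => Finset.sum_comm

/-- A Riemannian-type structure: metric, inverse, and a compatible torsion-free connection. -/
structure Geom (d : ℕ) where
  g : (Fin d → ℝ) → Fin d → Fin d → ℝ
  ginv : (Fin d → ℝ) → Fin d → Fin d → ℝ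
  Γ : (Fin d → ℝ) → Fin d → Fin d → Fin d → ℝ
  hg_sym : ∀ x a b, g x a b = g x b a
  hginv_sym : ∀ x a b, ginv x a b = ginv x b a
  h_inv : ∀ x a c, (∑ b, ginv x a b * g x b c) = if a = c then (1:ℝ) else 0
  hg_smooth : ∀ a b, ContDiff ℝ (⊤ : ℕ∞) (fun x => g x a b)
  hginv_smooth : ∀ a b, ContDiff ℝ (⊤ : ℕ∞) (fun x => ginv x a b)
  hΓ_smooth : ∀ u a b, ContDiff ℝ (⊤ : ℕ∞) (fun x => Γ x u a b)
  hΓ_sym : ∀ x u a c, Γ x u a c = Γ x u c a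
  hcompat : ∀ x a b c, pd a (fun y => g y b c) x
      = (∑ u, Γ x u a b * g x u c) + (∑ u, Γ x u a c * g x b u)

namespace Geom

variable {d : ℕ} (G : Geom d)

theorem inv_g' (x) (a c : Fin d) :
    (∑ b, g G x a b * ginv G x b c) = if a = c then (1:ℝ) else 0 := by
  rw [show (∑ b, g G x a b * ginv G x b c) = ∑ b, ginv G x c b * g G x b a by
    apply Finset.sum_congr rfl; intro b _; rw [G.hg_sym, G.hginv_sym]; ring]
  rw [G.h_inv]
  simp [eq_comm]

theorem dg (x) (b c : Fin d) : DifferentiableAt ℝ (fun y => g G y b c) x :=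
  (G.hg_smooth b c).dAt x
theorem dginv (x) (b c : Fin d) : DifferentiableAt ℝ (fun y => ginv G y b c) x :=
  (G.hginv_smooth b c).dAt x
theorem dΓ (x) (u b c : Fin d) : DifferentiableAt ℝ (fun y => Γ G y u b c) x :=
  (G.hΓ_smooth u b c).dAt x

/-- derivative of the inverse metric -/
theorem ginv_pd (x) (e a w : Fin d) :
    pd e (fun y => ginv G y a w) x
      = -(∑ b, ginv G x a b * Γ G x w e b) - (∑ c, Γ G x a e c * ginv G x c w) := by
  have key : ∀ c : Fin d, (∑ b, pd e (fun y => ginv G y a b) x * g G x b c)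
      = -∑ b, ginv G x a b * pd e (fun y => g G y b c) x := by
    intro c
    have h0 : pd e (fun y => ∑ b, ginv G y a b * g G y b c) x = 0 := by
      rw [pd_congr e (fun y => G.h_inv y a c)]
      exact pd_const _ _ _
    rw [pd_sum _ e x (fun b _ => ((G.dginv x a b).fun_mul (G.dg x b c)))] at h0
    have h1 : ∀ b : Fin d, pd e (fun y => ginv G y a b * g G y b c) x
        = pd e (fun y => ginv G y a b) x * g G x b c
          + ginv G x a b * pd e (fun y => g G y b c) x := fun b =>
      pd_mul e x (G.dginv x a b) (G.dg x b c)
    rw [Finset.sum_congr rfl (fun b _ => h1 b), Finset.sum_add_distrib] at h0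
    linarith
  calc pd e (fun y => ginv G y a w) x
      = ∑ b, pd e (fun y => ginv G y a b) x * (if b = w then (1:ℝ) else 0) := by
        rw [mul_delta_sum]
    _ = ∑ b, pd e (fun y => ginv G y a b) x * (∑ c, g G x b c * ginv G x c w) := by
        apply Finset.sum_congr rfl; intro b _; rw [G.inv_g']
    _ = ∑ c, (∑ b, pd e (fun y => ginv G y a b) x * g G x b c) * ginv G x c w := by
        simp only [Finset.mul_sum, Finset.sum_mul]
        rw [Finset.sum_comm]
        apply Finset.sum_congr rfl; intro c _
        apply Finset.sum_congr rfl; intro b _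
        ring
    _ = ∑ c, (-∑ b, ginv G x a b * pd e (fun y => g G y b c) x) * ginv G x c w := by
        apply Finset.sum_congr rfl; intro c _; rw [key]
    _ = -∑ c, ∑ b, (ginv G x a b * ((∑ u, Γ G x u e b * g G x u c)
          + (∑ u, Γ G x u e c * g G x b u))) * ginv G x c w := by
        simp only [neg_mul, Finset.sum_neg_distrib, Finset.sum_mul]
        congr 1
        apply Finset.sum_congr rfl; intro c _
        apply Finset.sum_congr rfl; intro b _
        rw [G.hcompat]
    _ = -((∑ c, ∑ b, ∑ u, ginv G x a b * Γ G x u e b * (g G x u c * ginv G x c w))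
          + (∑ c, ∑ b, ∑ u, Γ G x u e c * ginv G x c w * (ginv G x a b * g G x b u))) := by
        congr 1
        rw [← Finset.sum_add_distrib]
        apply Finset.sum_congr rfl; intro c _
        rw [← Finset.sum_add_distrib]
        apply Finset.sum_congr rfl; intro b _
        simp only [Finset.sum_mul, Finset.mul_sum, mul_add, add_mul, ← Finset.sum_add_distrib]
        apply Finset.sum_congr rfl; intro u _
        ring
    _ = -(∑ b, ginv G x a b * Γ G x w e b) - (∑ c, Γ G x a e c * ginv G x c w) := by
        have p1 : (∑ c, ∑ b, ∑ u, ginv G x a b * Γ G x u e b * (g G x u c * ginv G x c w))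
            = ∑ b, ginv G x a b * Γ G x w e b := by
          rw [Finset.sum_comm]
          apply Finset.sum_congr rfl; intro b _
          rw [Finset.sum_comm]
          calc (∑ u, ∑ c, ginv G x a b * Γ G x u e b * (g G x u c * ginv G x c w))
              = ∑ u, ginv G x a b * Γ G x u e b * (if u = w then (1:ℝ) else 0) := by
                apply Finset.sum_congr rfl; intro u _
                rw [← Finset.mul_sum, G.inv_g']
            _ = ginv G x a b * Γ G x w e b := mul_delta_sum _ _
        have p2 : (∑ c, ∑ b, ∑ u, Γ G x u e c * ginv G x c w * (ginv G x a b * g G x b u))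
            = ∑ c, Γ G x a e c * ginv G x c w := by
          apply Finset.sum_congr rfl; intro c _
          rw [Finset.sum_comm]
          calc (∑ u, ∑ b, Γ G x u e c * ginv G x c w * (ginv G x a b * g G x b u))
              = ∑ u, Γ G x u e c * ginv G x c w * (if a = u then (1:ℝ) else 0) := by
                apply Finset.sum_congr rfl; intro u _
                rw [← Finset.mul_sum, G.h_inv]
            _ = Γ G x a e c * ginv G x c w := mul_delta_sum' _ _
        rw [p1, p2]
        ring

/-- Riemann curvature tensor `R^ρ_{σμν}` of the connection. -/
noncomputable def Riem (x : Fin d → ℝ) (ρ σ μ ν : Fin d) : ℝ :=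
  pd μ (fun y => Γ G y ρ ν σ) x - pd ν (fun y => Γ G y ρ μ σ) x
    + (∑ lam, Γ G x ρ μ lam * Γ G x lam ν σ) - (∑ lam, Γ G x ρ ν lam * Γ G x lam μ σ)

/-- Lowered Riemann tensor `R_{aσμν} = g_{au} R^u_{σμν}`. -/
noncomputable def RiemL (x : Fin d → ℝ) (a σ μ ν : Fin d) : ℝ :=
  ∑ u, g G x a u * Riem G x u σ μ ν

theorem riem_smooth (ρ σ μ ν : Fin d) : ContDiff ℝ (⊤ : ℕ∞) (fun x => Riem G x ρ σ μ ν) := by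
  unfold Riem
  exact (((contDiff_pd μ (G.hΓ_smooth ρ ν σ)).sub (contDiff_pd ν (G.hΓ_smooth ρ μ σ))).add
    (ContDiff.sum fun i _ => (G.hΓ_smooth ρ μ i).mul (G.hΓ_smooth i ν σ))).sub
    (ContDiff.sum fun i _ => (G.hΓ_smooth ρ ν i).mul (G.hΓ_smooth i μ σ))

theorem dRiem (x) (ρ σ μ ν : Fin d) : DifferentiableAt ℝ (fun y => Riem G y ρ σ μ ν) x :=
  (G.riem_smooth ρ σ μ ν).dAt x

theorem ricci_eq (x) (α β : Fin d) : ricci (Γ G) x α β = ∑ μ, Riem G x μ β μ α := by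
  simp only [ricci, Riem, Finset.sum_add_distrib, Finset.sum_sub_distrib]

theorem riem_antisym2 (x) (ρ σ μ ν : Fin d) : Riem G x ρ σ μ ν = -Riem G x ρ σ ν μ := by
  simp only [Riem]; ring

theorem pdΓ_sym (x) (m u a b : Fin d) :
    pd m (fun y => Γ G y u a b) x = pd m (fun y => Γ G y u b a) x :=
  pd_congr m (fun y => G.hΓ_sym y u a b) x

/-- First Bianchi identity. -/
theorem bianchi1 (x) (ρ σ μ ν : Fin d) :
    Riem G x ρ σ μ ν + Riem G x ρ μ ν σ + Riem G x ρ ν σ μ = 0 := by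
  have hq : (∑ lam, (Γ G x ρ μ lam * Γ G x lam ν σ - Γ G x ρ ν lam * Γ G x lam μ σ
      + (Γ G x ρ ν lam * Γ G x lam σ μ - Γ G x ρ σ lam * Γ G x lam ν μ)
      + (Γ G x ρ σ lam * Γ G x lam μ ν - Γ G x ρ μ lam * Γ G x lam σ ν))) = 0 :=
    Finset.sum_eq_zero (fun lam _ => by
      rw [G.hΓ_sym x lam ν σ, G.hΓ_sym x lam σ μ, G.hΓ_sym x lam μ ν]; ring)
  simp only [Finset.sum_add_distrib, Finset.sum_sub_distrib] at hq
  simp only [Riem]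
  rw [G.pdΓ_sym x ν ρ σ μ, G.pdΓ_sym x σ ρ μ ν, G.pdΓ_sym x μ ρ ν σ]
  linarith [hq]

/-- Second derivative of the metric, fully expanded via compatibility. -/
theorem second_pd_g (x) (e c a b : Fin d) :
    pd e (fun y => pd c (fun z => g G z a b) y) x
      = (∑ u, (pd e (fun y => Γ G y u c a) x * g G x u b
              + pd e (fun y => Γ G y u c b) x * g G x a u))
        + ∑ u, ∑ v, (Γ G x u c a * Γ G x v e u * g G x v b
              + Γ G x u c a * Γ G x v e b * g G x u v
              + Γ G x u c b * Γ G x v e a * g G x v u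
              + Γ G x u c b * Γ G x v e u * g G x a v) := by
  have hfun : (fun y => pd c (fun z => g G z a b) y)
      = fun y => (∑ u, Γ G y u c a * g G y u b) + (∑ u, Γ G y u c b * g G y a u) :=
    funext fun y => G.hcompat y c a b
  rw [hfun]
  rw [pd_add e x
    ((DifferentiableAt.fun_sum (fun u _ => (G.dΓ x u c a).fun_mul (G.dg x u b))))
    ((DifferentiableAt.fun_sum (fun u _ => (G.dΓ x u c b).fun_mul (G.dg x a u))))]
  rw [pd_sum _ e x (fun u _ => (G.dΓ x u c a).fun_mul (G.dg x u b)),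
      pd_sum _ e x (fun u _ => (G.dΓ x u c b).fun_mul (G.dg x a u))]
  have h1 : ∀ u : Fin d, pd e (fun y => Γ G y u c a * g G y u b) x
      = pd e (fun y => Γ G y u c a) x * g G x u b
        + Γ G x u c a * ((∑ v, Γ G x v e u * g G x v b) + (∑ v, Γ G x v e b * g G x u v)) :=
    fun u => by rw [pd_mul e x (G.dΓ x u c a) (G.dg x u b), G.hcompat x e u b]
  have h2 : ∀ u : Fin d, pd e (fun y => Γ G y u c b * g G y a u) x
      = pd e (fun y => Γ G y u c b) x * g G x a u
        + Γ G x u c b * ((∑ v, Γ G x v e a * g G x v u) + (∑ v, Γ G x v e u * g G x a v)) :=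
    fun u => by rw [pd_mul e x (G.dΓ x u c b) (G.dg x a u), G.hcompat x e a u]
  rw [Finset.sum_congr rfl fun u _ => h1 u, Finset.sum_congr rfl fun u _ => h2 u]
  simp only [mul_add, Finset.mul_sum, Finset.sum_add_distrib, mul_assoc]
  ring


/-- Antisymmetry of the lowered Riemann tensor in its first two slots. -/
theorem riemL_antisym1 (x) (a b e c : Fin d) :
    RiemL G x a b e c + RiemL G x b a e c = 0 := by
  have hcomm : pd e (fun y => pd c (fun z => g G z a b) y) x
      = pd c (fun y => pd e (fun z => g G z a b) y) x := pd_comm e c (G.hg_smooth a b) x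
  rw [G.second_pd_g x e c a b, G.second_pd_g x c e a b] at hcomm
  -- split the goal into D-part and Q-part
  have hsplit : RiemL G x a b e c + RiemL G x b a e c
      = (∑ u, (g G x a u * (pd e (fun y => Γ G y u c b) x - pd c (fun y => Γ G y u e b) x)
            + g G x b u * (pd e (fun y => Γ G y u c a) x - pd c (fun y => Γ G y u e a) x)))
        + ∑ u, ∑ v, (g G x a u * (Γ G x u e v * Γ G x v c b - Γ G x u c v * Γ G x v e b)
            + g G x b u * (Γ G x u e v * Γ G x v c a - Γ G x u c v * Γ G x v e a)) := by
    simp only [RiemL, Riem, mul_add, mul_sub, Finset.mul_sum, Finset.sum_add_distrib,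
      Finset.sum_sub_distrib]
    ring
  have hD : (∑ u, (g G x a u * (pd e (fun y => Γ G y u c b) x - pd c (fun y => Γ G y u e b) x)
            + g G x b u * (pd e (fun y => Γ G y u c a) x - pd c (fun y => Γ G y u e a) x)))
      = (∑ u, (pd e (fun y => Γ G y u c a) x * g G x u b
              + pd e (fun y => Γ G y u c b) x * g G x a u))
        - (∑ u, (pd c (fun y => Γ G y u e a) x * g G x u b
              + pd c (fun y => Γ G y u e b) x * g G x a u)) := by
    rw [← Finset.sum_sub_distrib]
    apply Finset.sum_congr rfl; intro u _
    rw [G.hg_sym x u b]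
    ring
  have key : (∑ u, ∑ v,
      ((g G x a u * (Γ G x u e v * Γ G x v c b - Γ G x u c v * Γ G x v e b)
            + g G x b u * (Γ G x u e v * Γ G x v c a - Γ G x u c v * Γ G x v e a))
        - (Γ G x u c a * Γ G x v e u * g G x v b
              + Γ G x u c a * Γ G x v e b * g G x u v
              + Γ G x u c b * Γ G x v e a * g G x v u
              + Γ G x u c b * Γ G x v e u * g G x a v)
        + (Γ G x u e a * Γ G x v c u * g G x v b
              + Γ G x u e a * Γ G x v c b * g G x u v
              + Γ G x u e b * Γ G x v c a * g G x v u
              + Γ G x u e b * Γ G x v c u * g G x a v))) = 0 := by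
    apply sum_antisym_zero
    intro u v
    rw [G.hg_sym x b u, G.hg_sym x b v]
    ring
  have hQ : (∑ u, ∑ v, (g G x a u * (Γ G x u e v * Γ G x v c b - Γ G x u c v * Γ G x v e b)
            + g G x b u * (Γ G x u e v * Γ G x v c a - Γ G x u c v * Γ G x v e a)))
      = (∑ u, ∑ v, (Γ G x u c a * Γ G x v e u * g G x v b
              + Γ G x u c a * Γ G x v e b * g G x u v
              + Γ G x u c b * Γ G x v e a * g G x v u
              + Γ G x u c b * Γ G x v e u * g G x a v))
        - (∑ u, ∑ v, (Γ G x u e a * Γ G x v c u * g G x v b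
              + Γ G x u e a * Γ G x v c b * g G x u v
              + Γ G x u e b * Γ G x v c a * g G x v u
              + Γ G x u e b * Γ G x v c u * g G x a v)) := by
    rw [sum2_sub_add] at key
    linarith [key]
  rw [hsplit, hD, hQ]
  linarith [hcomm]

theorem riemL_antisym2 (x) (a b μ ν : Fin d) : RiemL G x a b μ ν = -RiemL G x a b ν μ := by
  simp only [RiemL]
  rw [← Finset.sum_neg_distrib]
  apply Finset.sum_congr rfl; intro u _
  rw [G.riem_antisym2 x u b μ ν]
  ring

theorem riemL_bianchi1 (x) (a σ μ ν : Fin d) :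
    RiemL G x a σ μ ν + RiemL G x a μ ν σ + RiemL G x a ν σ μ = 0 := by
  simp only [RiemL, ← Finset.sum_add_distrib]
  apply Finset.sum_eq_zero; intro u _
  linear_combination G.g x a u * G.bianchi1 x u σ μ ν

/-- Pair symmetry of the lowered Riemann tensor. -/
theorem riemL_pair (x) (a b c e : Fin d) : RiemL G x a b c e = RiemL G x c e a b := by
  have B1 := G.riemL_bianchi1 x a b c e
  have B2 := G.riemL_bianchi1 x b c e a
  have B3 := G.riemL_bianchi1 x c e a b
  have B4 := G.riemL_bianchi1 x e a b c
  linarith [G.riemL_antisym1 x a b c e, G.riemL_antisym1 x a c e b, G.riemL_antisym1 x a e b c,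
    G.riemL_antisym1 x b c e a, G.riemL_antisym1 x b e a c, G.riemL_antisym1 x b a c e,
    G.riemL_antisym1 x c e a b, G.riemL_antisym1 x c a b e, G.riemL_antisym1 x c b e a,
    G.riemL_antisym1 x e a b c, G.riemL_antisym1 x e b c a, G.riemL_antisym1 x e c a b,
    G.riemL_antisym2 x a b c e, G.riemL_antisym2 x b c e a, G.riemL_antisym2 x c e a b,
    G.riemL_antisym2 x e a b c, G.riemL_antisym2 x b a c e, G.riemL_antisym2 x c b e a,
    G.riemL_antisym2 x a c e b, G.riemL_antisym2 x e c a b, G.riemL_antisym2 x a e b c,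
    G.riemL_antisym2 x b e a c, G.riemL_antisym2 x c a b e, G.riemL_antisym2 x e b c a]

/-- Ricci tensor. -/
noncomputable def Ric (x : Fin d → ℝ) (σ ν : Fin d) : ℝ := ∑ μ, Riem G x μ σ μ ν

theorem ricci_eq_ric (x) (α β : Fin d) : ricci (Γ G) x α β = Ric G x β α := G.ricci_eq x α β

theorem riem_from_L (x) (u σ μ ν : Fin d) :
    Riem G x u σ μ ν = ∑ a, ginv G x u a * RiemL G x a σ μ ν := by
  have h1 : ∀ w, ((if u = w then (1:ℝ) else 0)) * Riem G x w σ μ ν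
      = ∑ a, ginv G x u a * g G x a w * Riem G x w σ μ ν := by
    intro w; rw [← Finset.sum_mul, G.h_inv]
  calc Riem G x u σ μ ν
      = ∑ w, (if u = w then (1:ℝ) else 0) * Riem G x w σ μ ν :=
        (sum_delta' u fun w => Riem G x w σ μ ν).symm
    _ = ∑ w, ∑ a, ginv G x u a * g G x a w * Riem G x w σ μ ν :=
        Finset.sum_congr rfl fun w _ => h1 w
    _ = ∑ a, ginv G x u a * RiemL G x a σ μ ν := by
        rw [Finset.sum_comm]
        apply Finset.sum_congr rfl; intro a _
        simp only [RiemL, Finset.mul_sum]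
        apply Finset.sum_congr rfl; intro w _
        ring

theorem ric_sym (x) (σ ν : Fin d) : Ric G x σ ν = Ric G x ν σ := by
  calc Ric G x σ ν = ∑ μ, ∑ a, ginv G x μ a * RiemL G x a σ μ ν := by
        apply Finset.sum_congr rfl; intro μ _; exact G.riem_from_L x μ σ μ ν
    _ = ∑ a, ∑ μ, ginv G x a μ * RiemL G x μ ν a σ := by
        rw [Finset.sum_comm]
        apply Finset.sum_congr rfl; intro a _
        apply Finset.sum_congr rfl; intro μ _
        rw [G.hginv_sym x a μ, G.riemL_pair x a σ μ ν]
    _ = Ric G x ν σ := by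
        apply Finset.sum_congr rfl; intro a _
        exact (G.riem_from_L x a ν a σ).symm

/-- Covariant derivative of the Riemann tensor. -/
noncomputable def CovRiem (x : Fin d → ℝ) (e ρ σ μ ν : Fin d) : ℝ :=
  pd e (fun y => Riem G y ρ σ μ ν) x
    + (∑ u, Γ G x ρ e u * Riem G x u σ μ ν)
    - (∑ u, Γ G x u e σ * Riem G x ρ u μ ν)
    - (∑ u, Γ G x u e μ * Riem G x ρ σ u ν)
    - (∑ u, Γ G x u e ν * Riem G x ρ σ μ u)

theorem pd_riem (x) (e ρ σ μ ν : Fin d) :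
    pd e (fun y => Riem G y ρ σ μ ν) x
      = pd e (fun y => pd μ (fun z => Γ G z ρ ν σ) y) x
        - pd e (fun y => pd ν (fun z => Γ G z ρ μ σ) y) x
        + (∑ u, (pd e (fun y => Γ G y ρ μ u) x * Γ G x u ν σ
            + Γ G x ρ μ u * pd e (fun y => Γ G y u ν σ) x))
        - (∑ u, (pd e (fun y => Γ G y ρ ν u) x * Γ G x u μ σ
            + Γ G x ρ ν u * pd e (fun y => Γ G y u μ σ) x)) := by
  have hfun : (fun y => Riem G y ρ σ μ ν) = fun y =>
      (pd μ (fun z => Γ G z ρ ν σ) y - pd ν (fun z => Γ G z ρ μ σ) y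
        + ∑ lam, Γ G y ρ μ lam * Γ G y lam ν σ) - ∑ lam, Γ G y ρ ν lam * Γ G y lam μ σ := rfl
  have d1 : DifferentiableAt ℝ (fun y => pd μ (fun z => Γ G z ρ ν σ) y) x :=
    (contDiff_pd μ (G.hΓ_smooth ρ ν σ)).dAt x
  have d2 : DifferentiableAt ℝ (fun y => pd ν (fun z => Γ G z ρ μ σ) y) x :=
    (contDiff_pd ν (G.hΓ_smooth ρ μ σ)).dAt x
  have d3 : DifferentiableAt ℝ (fun y => ∑ lam, Γ G y ρ μ lam * Γ G y lam ν σ) x :=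
    DifferentiableAt.fun_sum fun i _ => (G.dΓ x ρ μ i).fun_mul (G.dΓ x i ν σ)
  have d4 : DifferentiableAt ℝ (fun y => ∑ lam, Γ G y ρ ν lam * Γ G y lam μ σ) x :=
    DifferentiableAt.fun_sum fun i _ => (G.dΓ x ρ ν i).fun_mul (G.dΓ x i μ σ)
  rw [hfun]
  rw [pd_sub e x ((d1.fun_sub d2).fun_add d3) d4, pd_add e x (d1.fun_sub d2) d3, pd_sub e x d1 d2]
  rw [pd_sum _ e x (fun i _ => (G.dΓ x ρ μ i).fun_mul (G.dΓ x i ν σ)),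
      pd_sum _ e x (fun i _ => (G.dΓ x ρ ν i).fun_mul (G.dΓ x i μ σ))]
  rw [Finset.sum_congr rfl fun u _ => pd_mul e x (G.dΓ x ρ μ u) (G.dΓ x u ν σ),
      Finset.sum_congr rfl fun u _ => pd_mul e x (G.dΓ x ρ ν u) (G.dΓ x u μ σ)]

theorem bianchi2 (x) (e ρ σ μ ν : Fin d) :
    CovRiem G x e ρ σ μ ν + CovRiem G x μ ρ σ ν e + CovRiem G x ν ρ σ e μ = 0 := by
  simp only [CovRiem]
  rw [G.pd_riem x e ρ σ μ ν, G.pd_riem x μ ρ σ ν e, G.pd_riem x ν ρ σ e μ]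
  rw [show pd μ (fun y => pd ν (fun z => Γ G z ρ e σ) y) x
      = pd ν (fun y => pd μ (fun z => Γ G z ρ e σ) y) x from pd_comm μ ν (G.hΓ_smooth ρ e σ) x,
    show pd ν (fun y => pd e (fun z => Γ G z ρ μ σ) y) x
      = pd e (fun y => pd ν (fun z => Γ G z ρ μ σ) y) x from pd_comm ν e (G.hΓ_smooth ρ μ σ) x,
    show pd μ (fun y => pd e (fun z => Γ G z ρ ν σ) y) x
      = pd e (fun y => pd μ (fun z => Γ G z ρ ν σ) y) x from pd_comm μ e (G.hΓ_smooth ρ ν σ) x]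
  simp only [Riem, mul_add, mul_sub, sub_mul, add_mul, Finset.mul_sum,
    Finset.sum_add_distrib, Finset.sum_sub_distrib]
  have hF : (∑ u, (pd e (fun y => Γ G y ρ μ u) x * Γ G x u ν σ
          + Γ G x ρ μ u * pd e (fun y => Γ G y u ν σ) x
          - pd e (fun y => Γ G y ρ ν u) x * Γ G x u μ σ
          - Γ G x ρ ν u * pd e (fun y => Γ G y u μ σ) x
          + Γ G x ρ e u * pd μ (fun y => Γ G y u ν σ) x
          - Γ G x ρ e u * pd ν (fun y => Γ G y u μ σ) x
          - Γ G x u e σ * pd μ (fun y => Γ G y ρ ν u) x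
          + Γ G x u e σ * pd ν (fun y => Γ G y ρ μ u) x
          - Γ G x u e μ * pd u (fun y => Γ G y ρ ν σ) x
          + Γ G x u e μ * pd ν (fun y => Γ G y ρ u σ) x
          - Γ G x u e ν * pd μ (fun y => Γ G y ρ u σ) x
          + Γ G x u e ν * pd u (fun y => Γ G y ρ μ σ) x
          + pd μ (fun y => Γ G y ρ ν u) x * Γ G x u e σ
          + Γ G x ρ ν u * pd μ (fun y => Γ G y u e σ) x
          - pd μ (fun y => Γ G y ρ e u) x * Γ G x u ν σ
          - Γ G x ρ e u * pd μ (fun y => Γ G y u ν σ) x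
          + Γ G x ρ μ u * pd ν (fun y => Γ G y u e σ) x
          - Γ G x ρ μ u * pd e (fun y => Γ G y u ν σ) x
          - Γ G x u μ σ * pd ν (fun y => Γ G y ρ e u) x
          + Γ G x u μ σ * pd e (fun y => Γ G y ρ ν u) x
          - Γ G x u μ ν * pd u (fun y => Γ G y ρ e σ) x
          + Γ G x u μ ν * pd e (fun y => Γ G y ρ u σ) x
          - Γ G x u μ e * pd ν (fun y => Γ G y ρ u σ) x
          + Γ G x u μ e * pd u (fun y => Γ G y ρ ν σ) x
          + pd ν (fun y => Γ G y ρ e u) x * Γ G x u μ σ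
          + Γ G x ρ e u * pd ν (fun y => Γ G y u μ σ) x
          - pd ν (fun y => Γ G y ρ μ u) x * Γ G x u e σ
          - Γ G x ρ μ u * pd ν (fun y => Γ G y u e σ) x
          + Γ G x ρ ν u * pd e (fun y => Γ G y u μ σ) x
          - Γ G x ρ ν u * pd μ (fun y => Γ G y u e σ) x
          - Γ G x u ν σ * pd e (fun y => Γ G y ρ μ u) x
          + Γ G x u ν σ * pd μ (fun y => Γ G y ρ e u) x
          - Γ G x u ν e * pd u (fun y => Γ G y ρ μ σ) x
          + Γ G x u ν e * pd μ (fun y => Γ G y ρ u σ) x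
          - Γ G x u ν μ * pd e (fun y => Γ G y ρ u σ) x
          + Γ G x u ν μ * pd u (fun y => Γ G y ρ e σ) x)) = 0 := by
    apply Finset.sum_eq_zero; intro u _
    rw [G.hΓ_sym x u μ e, G.hΓ_sym x u ν μ, G.hΓ_sym x u ν e]
    ring
  have hH : (∑ u, ∑ v, (Γ G x ρ e u * (Γ G x u μ v * Γ G x v ν σ)
          - Γ G x ρ e u * (Γ G x u ν v * Γ G x v μ σ)
          - Γ G x u e σ * (Γ G x ρ μ v * Γ G x v ν u)
          + Γ G x u e σ * (Γ G x ρ ν v * Γ G x v μ u)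
          - Γ G x u e μ * (Γ G x ρ u v * Γ G x v ν σ)
          + Γ G x u e μ * (Γ G x ρ ν v * Γ G x v u σ)
          - Γ G x u e ν * (Γ G x ρ μ v * Γ G x v u σ)
          + Γ G x u e ν * (Γ G x ρ u v * Γ G x v μ σ)
          + Γ G x ρ μ u * (Γ G x u ν v * Γ G x v e σ)
          - Γ G x ρ μ u * (Γ G x u e v * Γ G x v ν σ)
          - Γ G x u μ σ * (Γ G x ρ ν v * Γ G x v e u)
          + Γ G x u μ σ * (Γ G x ρ e v * Γ G x v ν u)
          - Γ G x u μ ν * (Γ G x ρ u v * Γ G x v e σ)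
          + Γ G x u μ ν * (Γ G x ρ e v * Γ G x v u σ)
          - Γ G x u μ e * (Γ G x ρ ν v * Γ G x v u σ)
          + Γ G x u μ e * (Γ G x ρ u v * Γ G x v ν σ)
          + Γ G x ρ ν u * (Γ G x u e v * Γ G x v μ σ)
          - Γ G x ρ ν u * (Γ G x u μ v * Γ G x v e σ)
          - Γ G x u ν σ * (Γ G x ρ e v * Γ G x v μ u)
          + Γ G x u ν σ * (Γ G x ρ μ v * Γ G x v e u)
          - Γ G x u ν e * (Γ G x ρ u v * Γ G x v μ σ)
          + Γ G x u ν e * (Γ G x ρ μ v * Γ G x v u σ)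
          - Γ G x u ν μ * (Γ G x ρ e v * Γ G x v u σ)
          + Γ G x u ν μ * (Γ G x ρ u v * Γ G x v e σ))) = 0 := by
    apply sum_antisym_zero; intro u v
    rw [G.hΓ_sym x u μ e, G.hΓ_sym x u ν μ, G.hΓ_sym x u ν e,
      G.hΓ_sym x v μ e, G.hΓ_sym x v ν μ, G.hΓ_sym x v ν e]
    ring
  simp only [Finset.sum_add_distrib, Finset.sum_sub_distrib] at hF hH
  linarith [hF, hH]

theorem pd_neg {d' : ℕ} (a : Fin d') (f : (Fin d' → ℝ) → ℝ) (x) :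
    pd a (fun y => -f y) x = -pd a f x := by
  simp [pd, fderiv_neg]

theorem ric_smooth (σ ν : Fin d) : ContDiff ℝ (⊤ : ℕ∞) (fun x => Ric G x σ ν) :=
  ContDiff.sum fun μ _ => G.riem_smooth μ σ μ ν

theorem dRic (x) (σ ν : Fin d) : DifferentiableAt ℝ (fun y => Ric G y σ ν) x :=
  (G.ric_smooth σ ν).dAt x

/-- Scalar curvature. -/
noncomputable def Sc (x : Fin d → ℝ) : ℝ := ∑ a, ∑ b, ginv G x a b * Ric G x a b

theorem sc_smooth : ContDiff ℝ (⊤ : ℕ∞) (fun x => Sc G x) :=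
  ContDiff.sum fun a _ => ContDiff.sum fun b _ => (G.hginv_smooth a b).mul (G.ric_smooth a b)

/-- Covariant derivative of the Ricci tensor. -/
noncomputable def CovRic (x : Fin d → ℝ) (e σ ν : Fin d) : ℝ :=
  pd e (fun y => Ric G y σ ν) x
    - (∑ u, Γ G x u e σ * Ric G x u ν)
    - (∑ u, Γ G x u e ν * Ric G x σ u)

theorem contract13 (x) (e σ ν : Fin d) :
    (∑ μ, CovRiem G x e μ σ μ ν) = CovRic G x e σ ν := by
  simp only [CovRiem, CovRic, Finset.sum_add_distrib, Finset.sum_sub_distrib]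
  have h1 : (∑ μ, pd e (fun y => Riem G y μ σ μ ν) x) = pd e (fun y => Ric G y σ ν) x := by
    rw [show (fun y => Ric G y σ ν) = fun y => ∑ μ, Riem G y μ σ μ ν from rfl,
      pd_sum _ e x (fun μ _ => G.dRiem x μ σ μ ν)]
  have h2 : (∑ μ, ∑ u, Γ G x μ e u * Riem G x u σ μ ν)
      = ∑ μ, ∑ u, Γ G x u e μ * Riem G x μ σ u ν := by
    rw [Finset.sum_comm]
  have h3 : (∑ μ, ∑ u, Γ G x u e σ * Riem G x μ u μ ν) = ∑ u, Γ G x u e σ * Ric G x u ν := by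
    rw [Finset.sum_comm]
    apply Finset.sum_congr rfl; intro u _
    rw [Ric, Finset.mul_sum]
  have h4 : (∑ μ, ∑ u, Γ G x u e ν * Riem G x μ σ μ u) = ∑ u, Γ G x u e ν * Ric G x σ u := by
    rw [Finset.sum_comm]
    apply Finset.sum_congr rfl; intro u _
    rw [Ric, Finset.mul_sum]
  rw [h1, h2, h3, h4]
  ring

theorem contract14 (x) (e σ ν : Fin d) :
    (∑ μ, CovRiem G x e μ σ ν μ) = -CovRic G x e σ ν := by
  simp only [CovRiem, Finset.sum_add_distrib, Finset.sum_sub_distrib]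
  have h1 : (∑ μ, pd e (fun y => Riem G y μ σ ν μ) x) = -pd e (fun y => Ric G y σ ν) x := by
    have : ∀ μ : Fin d, pd e (fun y => Riem G y μ σ ν μ) x
        = -pd e (fun y => Riem G y μ σ μ ν) x := by
      intro μ
      rw [pd_congr e (fun y => G.riem_antisym2 y μ σ ν μ) x, pd_neg]
    rw [Finset.sum_congr rfl fun μ _ => this μ,
      show (fun y => Ric G y σ ν) = fun y => ∑ μ, Riem G y μ σ μ ν from rfl,
      pd_sum _ e x (fun μ _ => G.dRiem x μ σ μ ν), Finset.sum_neg_distrib]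
  have h2 : (∑ μ, ∑ u, Γ G x μ e u * Riem G x u σ ν μ)
      = ∑ μ, ∑ u, Γ G x u e μ * Riem G x μ σ ν u := by
    rw [Finset.sum_comm]
  have h3 : (∑ μ, ∑ u, Γ G x u e σ * Riem G x μ u ν μ) = -∑ u, Γ G x u e σ * Ric G x u ν := by
    rw [Finset.sum_comm, ← Finset.sum_neg_distrib]
    apply Finset.sum_congr rfl; intro u _
    rw [Ric, Finset.mul_sum, ← Finset.sum_neg_distrib]
    apply Finset.sum_congr rfl; intro μ _
    rw [G.riem_antisym2 x μ u ν μ]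
    ring
  have h4 : (∑ μ, ∑ u, Γ G x u e ν * Riem G x μ σ u μ) = -∑ u, Γ G x u e ν * Ric G x σ u := by
    rw [Finset.sum_comm, ← Finset.sum_neg_distrib]
    apply Finset.sum_congr rfl; intro u _
    rw [Ric, Finset.mul_sum, ← Finset.sum_neg_distrib]
    apply Finset.sum_congr rfl; intro μ _
    rw [G.riem_antisym2 x μ σ u μ]
    ring
  rw [h1, h2, h3, h4, CovRic]
  ring

theorem ric_bianchi (x) (e σ ν : Fin d) :
    CovRic G x e σ ν + (∑ μ, CovRiem G x μ μ σ ν e) - CovRic G x ν σ e = 0 := by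
  have hs : (∑ μ, (CovRiem G x e μ σ μ ν + CovRiem G x μ μ σ ν e + CovRiem G x ν μ σ e μ)) = 0 :=
    Finset.sum_eq_zero fun μ _ => G.bianchi2 x e μ σ μ ν
  rw [Finset.sum_add_distrib, Finset.sum_add_distrib, G.contract13 x e σ ν,
    G.contract14 x ν σ e] at hs
  linarith

theorem trace_covric (x) (e : Fin d) :
    (∑ a, ∑ b, ginv G x a b * CovRic G x e a b) = pd e (fun y => Sc G y) x := by
  have hexp : pd e (fun y => Sc G y) x
      = ∑ a, ∑ b, ((-(∑ u, ginv G x a u * Γ G x b e u) - (∑ u, Γ G x a e u * ginv G x u b))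
            * Ric G x a b
          + ginv G x a b * pd e (fun y => Ric G y a b) x) := by
    rw [show (fun y => Sc G y) = fun y => ∑ a, ∑ b, ginv G y a b * Ric G y a b from rfl,
      pd_sum _ e x (fun a _ => DifferentiableAt.fun_sum fun b _ => (G.dginv x a b).fun_mul (G.dRic x a b))]
    apply Finset.sum_congr rfl; intro a _
    rw [pd_sum _ e x (fun b _ => (G.dginv x a b).fun_mul (G.dRic x a b))]
    apply Finset.sum_congr rfl; intro b _
    rw [pd_mul e x (G.dginv x a b) (G.dRic x a b), G.ginv_pd x e a b]
  have step1 : (∑ a, ∑ b, ginv G x a b * CovRic G x e a b)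
      = (∑ a, ∑ b, ginv G x a b * pd e (fun y => Ric G y a b) x)
        - (∑ a, ∑ b, ∑ u, ginv G x a b * (Γ G x u e a * Ric G x u b))
        - (∑ a, ∑ b, ∑ u, ginv G x a b * (Γ G x u e b * Ric G x a u)) := by
    simp only [CovRic, mul_sub, Finset.mul_sum, Finset.sum_sub_distrib]
  have m1 : (∑ a, ∑ b, ∑ u, ginv G x a b * (Γ G x u e b * Ric G x a u))
      = ∑ a, ∑ b, (∑ u, ginv G x a u * Γ G x b e u) * Ric G x a b := by
    apply Finset.sum_congr rfl; intro a _
    rw [Finset.sum_comm]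
    apply Finset.sum_congr rfl; intro b _
    rw [Finset.sum_mul]
    apply Finset.sum_congr rfl; intro u _
    ring
  have m2 : (∑ a, ∑ b, ∑ u, ginv G x a b * (Γ G x u e a * Ric G x u b))
      = ∑ a, ∑ b, (∑ u, Γ G x a e u * ginv G x u b) * Ric G x a b := by
    rw [show (∑ a, ∑ b, ∑ u, ginv G x a b * (Γ G x u e a * Ric G x u b))
        = ∑ a, ∑ u, ∑ b, ginv G x a b * (Γ G x u e a * Ric G x u b) from
      Finset.sum_congr rfl fun a _ => Finset.sum_comm]
    rw [Finset.sum_comm]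
    apply Finset.sum_congr rfl; intro a _
    rw [Finset.sum_comm]
    apply Finset.sum_congr rfl; intro b _
    rw [Finset.sum_mul]
    apply Finset.sum_congr rfl; intro u _
    ring
  rw [step1, m1, m2, hexp]
  simp only [sub_mul, neg_mul, Finset.sum_add_distrib, Finset.sum_sub_distrib,
    Finset.sum_neg_distrib]
  ring

/-- contraction of `ginv` with the Riemann tensor in slots 2,3 gives minus the raised Ricci. -/
theorem dagger (x) (μ e : Fin d) :
    (∑ a, ∑ b, ginv G x a b * Riem G x μ a b e) = -∑ c, ginv G x μ c * Ric G x c e := by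
  have stepA : (∑ a, ∑ b, ginv G x a b * Riem G x μ a b e)
      = ∑ a, ∑ b, ∑ c, -(ginv G x μ c * (ginv G x b a * RiemL G x a c b e)) := by
    apply Finset.sum_congr rfl; intro a _
    apply Finset.sum_congr rfl; intro b _
    rw [G.riem_from_L x μ a b e, Finset.mul_sum]
    apply Finset.sum_congr rfl; intro c _
    have h := G.riemL_antisym1 x c a b e
    have hsym := G.hginv_sym x a b
    linear_combination ginv G x b a * ginv G x μ c * h
      + (ginv G x μ c * RiemL G x c a b e) * hsym
  rw [stepA]
  rw [show (∑ a, ∑ b, ∑ c, -(ginv G x μ c * (ginv G x b a * RiemL G x a c b e)))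
      = ∑ c, ∑ b, ∑ a, -(ginv G x μ c * (ginv G x b a * RiemL G x a c b e)) from sum3_13 _]
  rw [← Finset.sum_neg_distrib]
  apply Finset.sum_congr rfl; intro c _
  rw [show (∑ b, ∑ a, -(ginv G x μ c * (ginv G x b a * RiemL G x a c b e)))
      = -∑ b, ginv G x μ c * ∑ a, ginv G x b a * RiemL G x a c b e by
    rw [← Finset.sum_neg_distrib]
    apply Finset.sum_congr rfl; intro b _
    rw [Finset.mul_sum, ← Finset.sum_neg_distrib]]
  rw [show (∑ b, ginv G x μ c * ∑ a, ginv G x b a * RiemL G x a c b e)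
      = ginv G x μ c * Ric G x c e by
    rw [show (∑ b, ginv G x μ c * ∑ a, ginv G x b a * RiemL G x a c b e)
        = ∑ b, ginv G x μ c * Riem G x b c b e from
      Finset.sum_congr rfl fun b _ => by rw [← G.riem_from_L x b c b e]]
    rw [← Finset.mul_sum]
    rfl]

theorem w_pd_part (x) (e μ : Fin d) :
    (∑ a, ∑ b, ginv G x a b * pd μ (fun y => Riem G y μ a b e) x)
      = (∑ c, ∑ u, ginv G x μ u * Γ G x c μ u * Ric G x c e)
        + (∑ c, ∑ u, Γ G x μ μ u * ginv G x u c * Ric G x c e)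
        - (∑ c, ginv G x μ c * pd μ (fun y => Ric G y c e) x)
        + ((∑ a, ∑ b, ∑ u, ginv G x a u * Γ G x b μ u * Riem G x μ a b e)
          + (∑ a, ∑ b, ∑ u, Γ G x a μ u * ginv G x u b * Riem G x μ a b e)) := by
  have dRiemf : ∀ a b : Fin d, DifferentiableAt ℝ (fun y => ginv G y a b * Riem G y μ a b e) x :=
    fun a b => (G.dginv x a b).fun_mul (G.dRiem x μ a b e)
  have way1 : pd μ (fun y => ∑ a, ∑ b, ginv G y a b * Riem G y μ a b e) x
      = (∑ a, ∑ b, pd μ (fun y => ginv G y a b) x * Riem G x μ a b e)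
        + (∑ a, ∑ b, ginv G x a b * pd μ (fun y => Riem G y μ a b e) x) := by
    rw [pd_sum _ μ x (fun a _ => DifferentiableAt.fun_sum fun b _ => dRiemf a b)]
    rw [show (∑ a, pd μ (fun y => ∑ b, ginv G y a b * Riem G y μ a b e) x)
        = ∑ a, ∑ b, (pd μ (fun y => ginv G y a b) x * Riem G x μ a b e
            + ginv G x a b * pd μ (fun y => Riem G y μ a b e) x) from
      Finset.sum_congr rfl fun a _ => by
        rw [pd_sum _ μ x (fun b _ => dRiemf a b)]
        exact Finset.sum_congr rfl fun b _ => pd_mul μ x (G.dginv x a b) (G.dRiem x μ a b e)]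
    simp only [Finset.sum_add_distrib]
  have way2 : pd μ (fun y => ∑ a, ∑ b, ginv G y a b * Riem G y μ a b e) x
      = -((∑ c, pd μ (fun y => ginv G y μ c) x * Ric G x c e)
          + (∑ c, ginv G x μ c * pd μ (fun y => Ric G y c e) x)) := by
    rw [pd_congr μ (fun y => G.dagger y μ e) x, pd_neg]
    rw [pd_sum _ μ x (fun c _ => (G.dginv x μ c).fun_mul (G.dRic x c e))]
    rw [show (∑ c, pd μ (fun y => ginv G y μ c * Ric G y c e) x)
        = ∑ c, (pd μ (fun y => ginv G y μ c) x * Ric G x c e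
            + ginv G x μ c * pd μ (fun y => Ric G y c e) x) from
      Finset.sum_congr rfl fun c _ => pd_mul μ x (G.dginv x μ c) (G.dRic x c e)]
    rw [Finset.sum_add_distrib]
  have e1 : (∑ c, pd μ (fun y => ginv G y μ c) x * Ric G x c e)
      = -(∑ c, ∑ u, ginv G x μ u * Γ G x c μ u * Ric G x c e)
        - (∑ c, ∑ u, Γ G x μ μ u * ginv G x u c * Ric G x c e) := by
    rw [← Finset.sum_neg_distrib, ← Finset.sum_sub_distrib]
    apply Finset.sum_congr rfl; intro c _
    rw [G.ginv_pd x μ μ c, ← Finset.sum_neg_distrib, ← Finset.sum_sub_distrib,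
      Finset.sum_mul, ← Finset.sum_neg_distrib, ← Finset.sum_sub_distrib]
    apply Finset.sum_congr rfl; intro u _
    ring
  have e2 : (∑ a, ∑ b, pd μ (fun y => ginv G y a b) x * Riem G x μ a b e)
      = -(∑ a, ∑ b, ∑ u, ginv G x a u * Γ G x b μ u * Riem G x μ a b e)
        - (∑ a, ∑ b, ∑ u, Γ G x a μ u * ginv G x u b * Riem G x μ a b e) := by
    rw [← Finset.sum_neg_distrib, ← Finset.sum_sub_distrib]
    apply Finset.sum_congr rfl; intro a _
    rw [← Finset.sum_neg_distrib, ← Finset.sum_sub_distrib]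
    apply Finset.sum_congr rfl; intro b _
    rw [G.ginv_pd x μ a b, ← Finset.sum_neg_distrib, ← Finset.sum_sub_distrib,
      Finset.sum_mul, ← Finset.sum_neg_distrib, ← Finset.sum_sub_distrib]
    apply Finset.sum_congr rfl; intro u _
    ring
  have comb := way1.symm.trans way2
  rw [e1] at comb
  rw [e2] at comb
  linarith [comb]

theorem div_riem (x) (e : Fin d) :
    (∑ a, ∑ b, ginv G x a b * (∑ μ, CovRiem G x μ μ a b e))
      = -∑ a, ∑ b, ginv G x a b * CovRic G x b a e := by
  -- canonical atoms
  have hsplit : (∑ a, ∑ b, ginv G x a b * (∑ μ, CovRiem G x μ μ a b e))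
      = (∑ μ, ∑ a, ∑ b, ginv G x a b * pd μ (fun y => Riem G y μ a b e) x)
        + (∑ μ, ∑ a, ∑ b, ∑ u, ginv G x a b * (Γ G x μ μ u * Riem G x u a b e))
        - (∑ μ, ∑ a, ∑ b, ∑ u, ginv G x a b * (Γ G x u μ a * Riem G x μ u b e))
        - (∑ μ, ∑ a, ∑ b, ∑ u, ginv G x a b * (Γ G x u μ b * Riem G x μ a u e))
        - (∑ μ, ∑ a, ∑ b, ∑ u, ginv G x a b * (Γ G x u μ e * Riem G x μ a b u)) := by
    rw [show (∑ a, ∑ b, ginv G x a b * (∑ μ, CovRiem G x μ μ a b e))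
        = ∑ a, ∑ b, ∑ μ, ginv G x a b * CovRiem G x μ μ a b e from
      Finset.sum_congr rfl fun a _ => Finset.sum_congr rfl fun b _ => Finset.mul_sum ..]
    rw [sum3_rot]
    simp only [CovRiem, mul_add, mul_sub, Finset.mul_sum, Finset.sum_add_distrib,
      Finset.sum_sub_distrib]
  have hW1 : (∑ μ, ∑ a, ∑ b, ginv G x a b * pd μ (fun y => Riem G y μ a b e) x)
      = (∑ μ, ∑ c, ∑ u, ginv G x μ u * Γ G x c μ u * Ric G x c e)
        + (∑ μ, ∑ c, ∑ u, Γ G x μ μ u * ginv G x u c * Ric G x c e)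
        - (∑ μ, ∑ c, ginv G x μ c * pd μ (fun y => Ric G y c e) x)
        + ((∑ μ, ∑ a, ∑ b, ∑ u, ginv G x a u * Γ G x b μ u * Riem G x μ a b e)
          + (∑ μ, ∑ a, ∑ b, ∑ u, Γ G x a μ u * ginv G x u b * Riem G x μ a b e)) := by
    rw [Finset.sum_congr rfl fun μ _ => G.w_pd_part x e μ]
    simp only [Finset.sum_add_distrib, Finset.sum_sub_distrib]
  have hW2 : (∑ μ, ∑ a, ∑ b, ∑ u, ginv G x a b * (Γ G x μ μ u * Riem G x u a b e))
      = -(∑ μ, ∑ c, ∑ u, Γ G x μ μ u * ginv G x u c * Ric G x c e) := by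
    rw [← Finset.sum_neg_distrib]
    apply Finset.sum_congr rfl; intro μ _
    rw [sum3_rot]
    rw [show (∑ u, ∑ a, ∑ b, ginv G x a b * (Γ G x μ μ u * Riem G x u a b e))
        = ∑ u, Γ G x μ μ u * -∑ c, ginv G x u c * Ric G x c e from
      Finset.sum_congr rfl fun u _ => by
        rw [← G.dagger x u e, Finset.mul_sum]
        apply Finset.sum_congr rfl; intro a _
        rw [Finset.mul_sum]
        exact Finset.sum_congr rfl fun b _ => by ring]
    rw [show (∑ u, Γ G x μ μ u * -∑ c, ginv G x u c * Ric G x c e)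
        = ∑ u, ∑ c, -(Γ G x μ μ u * ginv G x u c * Ric G x c e) from
      Finset.sum_congr rfl fun u _ => by
        rw [mul_neg, Finset.mul_sum, ← Finset.sum_neg_distrib]
        exact Finset.sum_congr rfl fun c _ => by ring]
    rw [Finset.sum_comm, ← Finset.sum_neg_distrib]
    apply Finset.sum_congr rfl; intro c _
    rw [← Finset.sum_neg_distrib]
  have hW3 : (∑ μ, ∑ a, ∑ b, ∑ u, ginv G x a b * (Γ G x u μ a * Riem G x μ u b e))
      = ∑ μ, ∑ a, ∑ b, ∑ u, Γ G x a μ u * ginv G x u b * Riem G x μ a b e := by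
    apply Finset.sum_congr rfl; intro μ _
    rw [sum3_13]
    apply Finset.sum_congr rfl; intro a _
    apply Finset.sum_congr rfl; intro b _
    apply Finset.sum_congr rfl; intro u _
    ring
  have hW4 : (∑ μ, ∑ a, ∑ b, ∑ u, ginv G x a b * (Γ G x u μ b * Riem G x μ a u e))
      = ∑ μ, ∑ a, ∑ b, ∑ u, ginv G x a u * Γ G x b μ u * Riem G x μ a b e := by
    apply Finset.sum_congr rfl; intro μ _
    apply Finset.sum_congr rfl; intro a _
    rw [Finset.sum_comm]
    apply Finset.sum_congr rfl; intro b _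
    apply Finset.sum_congr rfl; intro u _
    ring
  have hW5 : (∑ μ, ∑ a, ∑ b, ∑ u, ginv G x a b * (Γ G x u μ e * Riem G x μ a b u))
      = -(∑ μ, ∑ c, ∑ u, Γ G x u μ e * ginv G x μ c * Ric G x c u) := by
    rw [← Finset.sum_neg_distrib]
    apply Finset.sum_congr rfl; intro μ _
    rw [sum3_rot]
    rw [show (∑ u, ∑ a, ∑ b, ginv G x a b * (Γ G x u μ e * Riem G x μ a b u))
        = ∑ u, Γ G x u μ e * -∑ c, ginv G x μ c * Ric G x c u from
      Finset.sum_congr rfl fun u _ => by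
        rw [← G.dagger x μ u, Finset.mul_sum]
        apply Finset.sum_congr rfl; intro a _
        rw [Finset.mul_sum]
        exact Finset.sum_congr rfl fun b _ => by ring]
    rw [show (∑ u, Γ G x u μ e * -∑ c, ginv G x μ c * Ric G x c u)
        = ∑ u, ∑ c, -(Γ G x u μ e * ginv G x μ c * Ric G x c u) from
      Finset.sum_congr rfl fun u _ => by
        rw [mul_neg, Finset.mul_sum, ← Finset.sum_neg_distrib]
        exact Finset.sum_congr rfl fun c _ => by ring]
    rw [Finset.sum_comm, ← Finset.sum_neg_distrib]
    apply Finset.sum_congr rfl; intro c _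
    rw [← Finset.sum_neg_distrib]
  -- the right-hand side
  have hVsplit : (∑ a, ∑ b, ginv G x a b * CovRic G x b a e)
      = (∑ a, ∑ b, ginv G x a b * pd b (fun y => Ric G y a e) x)
        - (∑ a, ∑ b, ∑ u, ginv G x a b * (Γ G x u b a * Ric G x u e))
        - (∑ a, ∑ b, ∑ u, ginv G x a b * (Γ G x u b e * Ric G x a u)) := by
    simp only [CovRic, mul_sub, Finset.mul_sum, Finset.sum_sub_distrib]
  have hB1 : (∑ a, ∑ b, ginv G x a b * pd b (fun y => Ric G y a e) x)
      = ∑ μ, ∑ c, ginv G x μ c * pd μ (fun y => Ric G y c e) x := by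
    rw [Finset.sum_comm]
    apply Finset.sum_congr rfl; intro b _
    apply Finset.sum_congr rfl; intro a _
    rw [G.hginv_sym x a b]
  have hB2 : (∑ a, ∑ b, ∑ u, ginv G x a b * (Γ G x u b a * Ric G x u e))
      = ∑ μ, ∑ c, ∑ u, ginv G x μ u * Γ G x c μ u * Ric G x c e := by
    rw [sum3_rot, sum3_rot]
    apply Finset.sum_congr rfl; intro b _
    apply Finset.sum_congr rfl; intro u _
    apply Finset.sum_congr rfl; intro a _
    rw [G.hginv_sym x a b]
    ring
  have hB3 : (∑ a, ∑ b, ∑ u, ginv G x a b * (Γ G x u b e * Ric G x a u))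
      = ∑ μ, ∑ c, ∑ u, Γ G x u μ e * ginv G x μ c * Ric G x c u := by
    rw [Finset.sum_comm]
    apply Finset.sum_congr rfl; intro b _
    apply Finset.sum_congr rfl; intro a _
    apply Finset.sum_congr rfl; intro u _
    rw [G.hginv_sym x a b]
    ring
  rw [hsplit, hW1, hW2, hW3, hW4, hW5, hVsplit, hB1, hB2, hB3]
  ring

theorem covric_v (x) (e : Fin d) :
    (∑ a, ∑ b, ginv G x a b * CovRic G x b a e) * 2 = pd e (fun y => Sc G y) x := by
  have hs : (∑ a, ∑ b, ginv G x a b * (CovRic G x e a b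
      + (∑ μ, CovRiem G x μ μ a b e) - CovRic G x b a e)) = 0 :=
    Finset.sum_eq_zero fun a _ => Finset.sum_eq_zero fun b _ => by
      rw [G.ric_bianchi x e a b]; ring
  simp only [mul_add, mul_sub, Finset.sum_add_distrib, Finset.sum_sub_distrib] at hs
  rw [G.trace_covric x e, G.div_riem x e] at hs
  linarith

theorem tr_ricci (x) : (∑ a, ∑ b, ginv G x a b * ricci (Γ G) x a b) = Sc G x := by
  rw [Finset.sum_comm]
  apply Finset.sum_congr rfl; intro b _
  apply Finset.sum_congr rfl; intro a _
  rw [G.ricci_eq_ric, G.hginv_sym x b a]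

theorem heinstein (y) (ν σ0 : Fin d) :
    einstein (g G) (ginv G) (Γ G) y ν σ0
      = Ric G y σ0 ν - (1/2) * g G y ν σ0 * Sc G y := by
  rw [einstein, G.ricci_eq_ric, G.tr_ricci]

/-- The contracted Bianchi identity, Riemannian case. -/
theorem core (x) (s : Fin d) :
    (∑ μ, ∑ ν, ginv G x μ ν *
        (pd μ (fun y => einstein (g G) (ginv G) (Γ G) y ν s) x
          - (∑ lam, Γ G x lam μ ν * einstein (g G) (ginv G) (Γ G) x lam s)
          - (∑ lam, Γ G x lam μ s * einstein (g G) (ginv G) (Γ G) x ν lam))) = 0 := by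
  have dSc : DifferentiableAt ℝ (fun y => Sc G y) x := (G.sc_smooth).dAt x
  have hpdE : ∀ μ ν : Fin d, pd μ (fun y => einstein (g G) (ginv G) (Γ G) y ν s) x
      = pd μ (fun y => Ric G y s ν) x
        - (1/2) * (pd μ (fun y => g G y ν s) x * Sc G x
            + g G x ν s * pd μ (fun y => Sc G y) x) := by
    intro μ ν
    rw [pd_congr μ (fun y => G.heinstein y ν s) x]
    rw [pd_sub μ x (G.dRic x s ν) (((G.dg x ν s).const_mul (1/2)).fun_mul dSc)]
    rw [pd_mul μ x ((G.dg x ν s).const_mul (1/2)) dSc]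
    rw [pd_const_mul μ (1/2) x (G.dg x ν s)]
    ring
  have hgoal : (∑ μ, ∑ ν, ginv G x μ ν *
        (pd μ (fun y => einstein (g G) (ginv G) (Γ G) y ν s) x
          - (∑ lam, Γ G x lam μ ν * einstein (g G) (ginv G) (Γ G) x lam s)
          - (∑ lam, Γ G x lam μ s * einstein (g G) (ginv G) (Γ G) x ν lam)))
      = (∑ μ, ∑ ν, ginv G x μ ν *
          (pd μ (fun y => Ric G y s ν) x
            - (∑ lam, Γ G x lam μ ν * Ric G x s lam)
            - (∑ lam, Γ G x lam μ s * Ric G x lam ν)))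
        + (∑ μ, ∑ ν, ginv G x μ ν *
            (-(1/2) * (pd μ (fun y => g G y ν s) x * Sc G x
                + g G x ν s * pd μ (fun y => Sc G y) x)
              + (1/2) * ((∑ lam, Γ G x lam μ ν * (g G x lam s * Sc G x))
                + (∑ lam, Γ G x lam μ s * (g G x ν lam * Sc G x))))) := by
    rw [← Finset.sum_add_distrib]
    apply Finset.sum_congr rfl; intro μ _
    rw [← Finset.sum_add_distrib]
    apply Finset.sum_congr rfl; intro ν _
    have h1 : (∑ lam, Γ G x lam μ ν * einstein (g G) (ginv G) (Γ G) x lam s)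
        = (∑ lam, Γ G x lam μ ν * Ric G x s lam)
          - (1/2) * (∑ lam, Γ G x lam μ ν * (g G x lam s * Sc G x)) := by
      rw [Finset.mul_sum, ← Finset.sum_sub_distrib]
      apply Finset.sum_congr rfl; intro lam _
      rw [G.heinstein x lam s]; ring
    have h2 : (∑ lam, Γ G x lam μ s * einstein (g G) (ginv G) (Γ G) x ν lam)
        = (∑ lam, Γ G x lam μ s * Ric G x lam ν)
          - (1/2) * (∑ lam, Γ G x lam μ s * (g G x ν lam * Sc G x)) := by
      rw [Finset.mul_sum, ← Finset.sum_sub_distrib]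
      apply Finset.sum_congr rfl; intro lam _
      rw [G.heinstein x ν lam]; ring
    rw [hpdE μ ν, h1, h2]
    ring
  have hX : (∑ μ, ∑ ν, ginv G x μ ν *
        (-(1/2) * (pd μ (fun y => g G y ν s) x * Sc G x
            + g G x ν s * pd μ (fun y => Sc G y) x)
          + (1/2) * ((∑ lam, Γ G x lam μ ν * (g G x lam s * Sc G x))
            + (∑ lam, Γ G x lam μ s * (g G x ν lam * Sc G x)))))
      = -(1/2) * pd s (fun y => Sc G y) x := by
    have hptw : ∀ μ ν : Fin d, ginv G x μ ν *
        (-(1/2) * (pd μ (fun y => g G y ν s) x * Sc G x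
            + g G x ν s * pd μ (fun y => Sc G y) x)
          + (1/2) * ((∑ lam, Γ G x lam μ ν * (g G x lam s * Sc G x))
            + (∑ lam, Γ G x lam μ s * (g G x ν lam * Sc G x))))
        = -(1/2) * (ginv G x μ ν * g G x ν s) * pd μ (fun y => Sc G y) x := by
      intro μ ν
      have hc := G.hcompat x μ ν s
      have e1 : (∑ lam, Γ G x lam μ ν * (g G x lam s * Sc G x))
          = (∑ lam, Γ G x lam μ ν * g G x lam s) * Sc G x := by
        rw [Finset.sum_mul]
        exact Finset.sum_congr rfl fun lam _ => by ring
      have e2 : (∑ lam, Γ G x lam μ s * (g G x ν lam * Sc G x))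
          = (∑ lam, Γ G x lam μ s * g G x ν lam) * Sc G x := by
        rw [Finset.sum_mul]
        exact Finset.sum_congr rfl fun lam _ => by ring
      rw [e1, e2]
      linear_combination (-(1/2) * ginv G x μ ν * Sc G x) * hc
    rw [Finset.sum_congr rfl fun μ _ => Finset.sum_congr rfl fun ν _ => hptw μ ν]
    have hδ : ∀ μ : Fin d, (∑ ν, -(1/2) * (ginv G x μ ν * g G x ν s) * pd μ (fun y => Sc G y) x)
        = -(1/2) * (if μ = s then (1:ℝ) else 0) * pd μ (fun y => Sc G y) x := by
      intro μ
      rw [← G.h_inv x μ s, Finset.mul_sum, Finset.sum_mul]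
    rw [Finset.sum_congr rfl fun μ _ => hδ μ]
    rw [Finset.sum_eq_single s]
    · simp
    · intro b _ hb; simp [hb]
    · intro h; exact absurd (Finset.mem_univ s) h
  have hU : (∑ μ, ∑ ν, ginv G x μ ν *
        (pd μ (fun y => Ric G y s ν) x
          - (∑ lam, Γ G x lam μ ν * Ric G x s lam)
          - (∑ lam, Γ G x lam μ s * Ric G x lam ν)))
      = ∑ a, ∑ b, ginv G x a b * CovRic G x b a s := by
    rw [Finset.sum_comm]
    apply Finset.sum_congr rfl; intro a _
    apply Finset.sum_congr rfl; intro b _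
    rw [CovRic, G.hginv_sym x b a]
    rw [pd_congr b (fun y => G.ric_sym y s a) x]
    rw [show (∑ lam, Γ G x lam b a * Ric G x s lam) = ∑ u, Γ G x u b a * Ric G x u s from
      Finset.sum_congr rfl fun u _ => by rw [G.ric_sym x s u]]
    rw [show (∑ lam, Γ G x lam b s * Ric G x lam a) = ∑ u, Γ G x u b s * Ric G x a u from
      Finset.sum_congr rfl fun u _ => by rw [G.ric_sym x u a]]
  have hhalf := G.covric_v x s
  rw [hgoal, hX, hU]
  linarith
end Geom

theorem pd_exp {d : ℕ} (a : Fin d) (u : (Fin d → ℝ) → ℝ) (x) (hu : DifferentiableAt ℝ u x) :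
    pd a (fun y => Real.exp (u y)) x = Real.exp (u x) * pd a u x := by
  unfold pd
  rw [fderiv_exp hu]
  simp

/-- **Contracted Bianchi identity for the Weyl connection.**
For a Weyl integrable structure `(V, g, dφ)` with Weyl connection `Γ`
(torsion-free, `∇g = dφ ⊗ g`) and Einstein tensor `G`,
`g^{μν} ∇_μ G_{νσ} = 0`, where `∇` is the Weyl connection. -/
theorem weyl_contracted_bianchi (d : ℕ)
    (g ginv : (Fin d → ℝ) → Fin d → Fin d → ℝ)
    (φ : (Fin d → ℝ) → ℝ)
    (Γ : (Fin d → ℝ) → Fin d → Fin d → Fin d → ℝ)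
    (hg_sym : ∀ x a b, g x a b = g x b a)
    (hginv_sym : ∀ x a b, ginv x a b = ginv x b a)
    (h_inv : ∀ x a c, (∑ b, ginv x a b * g x b c) = if a = c then (1:ℝ) else 0)
    (hg_smooth : ∀ a b, ContDiff ℝ (⊤ : ℕ∞) (fun x => g x a b))
    (hginv_smooth : ∀ a b, ContDiff ℝ (⊤ : ℕ∞) (fun x => ginv x a b))
    (hφ_smooth : ContDiff ℝ (⊤ : ℕ∞) φ)
    (hΓ_sym : ∀ x u a c, Γ x u a c = Γ x u c a)
    (hΓ_compat : ∀ x a b c,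
      pd a (fun y => g y b c) x - (∑ u, Γ x u a b * g x u c)
        - (∑ u, Γ x u a c * g x b u) = pd a φ x * g x b c) :
    ∀ x σ,
      (∑ μ, ∑ ν, ginv x μ ν *
        (pd μ (fun y => einstein g ginv Γ y ν σ) x
          - (∑ lam, Γ x lam μ ν * einstein g ginv Γ x lam σ)
          - (∑ lam, Γ x lam μ σ * einstein g ginv Γ x ν lam))) = 0 := by
  have hcompat' : ∀ x a b c, pd a (fun y => g y b c) x
      = (∑ u, Γ x u a b * g x u c) + (∑ u, Γ x u a c * g x b u) + pd a φ x * g x b c := by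
    intro x a b c
    have := hΓ_compat x a b c
    linarith
  -- the Christoffel symbols are given by an explicit smooth formula
  have hGam : ∀ x (l a b : Fin d), Γ x l a b = (1/2) * ∑ c, ginv x l c *
      (pd a (fun y => g y b c) x + pd b (fun y => g y a c) x - pd c (fun y => g y a b) x
        - pd a φ x * g x b c - pd b φ x * g x a c + pd c φ x * g x a b) := by
    intro x l a b
    have key : ∀ c : Fin d,
        pd a (fun y => g y b c) x + pd b (fun y => g y a c) x - pd c (fun y => g y a b) x
          - pd a φ x * g x b c - pd b φ x * g x a c + pd c φ x * g x a b
        = 2 * ∑ u, Γ x u a b * g x u c := by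
      intro c
      have h1 := hcompat' x a b c
      have h2 := hcompat' x b a c
      have h3 := hcompat' x c a b
      have e1 : (∑ u, Γ x u a c * g x b u) = ∑ u, Γ x u c a * g x u b :=
        Finset.sum_congr rfl fun u _ => by rw [hΓ_sym x u a c, hg_sym x b u]
      have e2 : (∑ u, Γ x u b c * g x a u) = ∑ u, Γ x u c b * g x a u :=
        Finset.sum_congr rfl fun u _ => by rw [hΓ_sym x u b c]
      have e3 : (∑ u, Γ x u b a * g x u c) = ∑ u, Γ x u a b * g x u c :=
        Finset.sum_congr rfl fun u _ => by rw [hΓ_sym x u b a]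
      have e4 : (∑ u, Γ x u c a * g x u b) = ∑ u, Γ x u c a * g x b u :=
        Finset.sum_congr rfl fun u _ => by rw [hg_sym x u b]
      have e5 : (∑ u, Γ x u c b * g x a u) = ∑ u, Γ x u c b * g x a u := rfl
      have hφ3 : pd c φ x * g x a b = pd c φ x * g x a b := rfl
      -- h3 written with first sum over g_{ub}
      linarith [h1, h2, h3, e1, e2, e3, e4]
    rw [show (∑ c, ginv x l c *
        (pd a (fun y => g y b c) x + pd b (fun y => g y a c) x - pd c (fun y => g y a b) x
          - pd a φ x * g x b c - pd b φ x * g x a c + pd c φ x * g x a b))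
        = ∑ c, ginv x l c * (2 * ∑ u, Γ x u a b * g x u c) from
      Finset.sum_congr rfl fun c _ => by rw [key c]]
    rw [show (∑ c, ginv x l c * (2 * ∑ u, Γ x u a b * g x u c))
        = 2 * ∑ u, Γ x u a b * (∑ c, ginv x l c * g x c u) by
      rw [show (∑ c, ginv x l c * (2 * ∑ u, Γ x u a b * g x u c))
          = ∑ c, ∑ u, 2 * (Γ x u a b * (ginv x l c * g x c u)) from
        Finset.sum_congr rfl fun c _ => by
          rw [Finset.mul_sum, Finset.mul_sum]
          exact Finset.sum_congr rfl fun u _ => by rw [hg_sym x u c]; ring]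
      rw [Finset.sum_comm, Finset.mul_sum]
      apply Finset.sum_congr rfl; intro u _
      rw [Finset.mul_sum, Finset.mul_sum]]
    rw [show (∑ u, Γ x u a b * (∑ c, ginv x l c * g x c u))
        = ∑ u, Γ x u a b * (if l = u then (1:ℝ) else 0) from
      Finset.sum_congr rfl fun u _ => by rw [h_inv x l u]]
    rw [mul_delta_sum' l (fun u => Γ x u a b)]
    ring
  have hΓ_smooth : ∀ l a b, ContDiff ℝ (⊤ : ℕ∞) (fun x => Γ x l a b) := by
    intro l a b
    rw [show (fun x => Γ x l a b) = fun x => (1/2) * ∑ c, ginv x l c *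
        (pd a (fun y => g y b c) x + pd b (fun y => g y a c) x - pd c (fun y => g y a b) x
          - pd a φ x * g x b c - pd b φ x * g x a c + pd c φ x * g x a b) from
      funext fun x => hGam x l a b]
    exact contDiff_const.mul (ContDiff.sum fun c _ => (hginv_smooth l c).mul
      ((((((contDiff_pd a (hg_smooth b c)).add (contDiff_pd b (hg_smooth a c))).sub
        (contDiff_pd c (hg_smooth a b))).sub
          ((contDiff_pd a hφ_smooth).mul (hg_smooth b c))).sub
            ((contDiff_pd b hφ_smooth).mul (hg_smooth a c))).add
              ((contDiff_pd c hφ_smooth).mul (hg_smooth a b))))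
  -- conformal metric
  have hexp1 : ∀ x : Fin d → ℝ, Real.exp (φ x) * Real.exp (-φ x) = 1 := by
    intro x; rw [← Real.exp_add]; simp
  have hdexp : ∀ x : Fin d → ℝ, DifferentiableAt ℝ (fun y => Real.exp (-φ y)) x :=
    fun x => ((hφ_smooth.neg).exp).dAt x
  have hpdexp : ∀ (a : Fin d) (x), pd a (fun y => Real.exp (-φ y)) x
      = Real.exp (-φ x) * (-pd a φ x) := by
    intro a x
    rw [show (fun y => Real.exp (-φ y)) = fun y => Real.exp ((fun z => -φ z) y) from rfl]
    rw [pd_exp a (fun z => -φ z) x ((hφ_smooth.neg).dAt x), Geom.pd_neg]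
  set G : Geom d :=
    { g := fun y a b => Real.exp (-φ y) * g y a b
      ginv := fun y a b => Real.exp (φ y) * ginv y a b
      Γ := Γ
      hg_sym := fun x a b => by
        show Real.exp (-φ x) * g x a b = Real.exp (-φ x) * g x b a
        rw [hg_sym x a b]
      hginv_sym := fun x a b => by
        show Real.exp (φ x) * ginv x a b = Real.exp (φ x) * ginv x b a
        rw [hginv_sym x a b]
      h_inv := fun x a c => by
        show (∑ b, (Real.exp (φ x) * ginv x a b) * (Real.exp (-φ x) * g x b c))
          = if a = c then (1:ℝ) else 0
        rw [show (∑ b, (Real.exp (φ x) * ginv x a b) * (Real.exp (-φ x) * g x b c))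
            = ∑ b, ginv x a b * g x b c from
          Finset.sum_congr rfl fun b _ => by
            have := hexp1 x
            linear_combination (ginv x a b * g x b c) * this]
        exact h_inv x a c
      hg_smooth := fun a b => ((hφ_smooth.neg).exp).mul (hg_smooth a b)
      hginv_smooth := fun a b => (hφ_smooth.exp).mul (hginv_smooth a b)
      hΓ_smooth := hΓ_smooth
      hΓ_sym := hΓ_sym
      hcompat := fun x a b c => by
        show pd a (fun y => Real.exp (-φ y) * g y b c) x
          = (∑ u, Γ x u a b * (Real.exp (-φ x) * g x u c))
            + (∑ u, Γ x u a c * (Real.exp (-φ x) * g x b u))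
        rw [pd_mul a x (hdexp x) ((hg_smooth b c).dAt x), hpdexp a x, hcompat' x a b c]
        rw [show (∑ u, Γ x u a b * (Real.exp (-φ x) * g x u c))
            = Real.exp (-φ x) * ∑ u, Γ x u a b * g x u c by
          rw [Finset.mul_sum]; exact Finset.sum_congr rfl fun u _ => by ring]
        rw [show (∑ u, Γ x u a c * (Real.exp (-φ x) * g x b u))
            = Real.exp (-φ x) * ∑ u, Γ x u a c * g x b u by
          rw [Finset.mul_sum]; exact Finset.sum_congr rfl fun u _ => by ring]
        ring }
  intro x s
  have hEin : einstein (fun y a b => Real.exp (-φ y) * g y a b)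
      (fun y a b => Real.exp (φ y) * ginv y a b) Γ = einstein g ginv Γ := by
    funext y ν t
    rw [einstein, einstein]
    rw [show (∑ μ, ∑ ν', (Real.exp (φ y) * ginv y μ ν') * ricci Γ y μ ν')
        = Real.exp (φ y) * ∑ μ, ∑ ν', ginv y μ ν' * ricci Γ y μ ν' by
      rw [Finset.mul_sum]
      apply Finset.sum_congr rfl; intro μ _
      rw [Finset.mul_sum]
      exact Finset.sum_congr rfl fun ν' _ => by ring]
    have := hexp1 y
    have h2 : (1:ℝ)/2 * (Real.exp (-φ y) * g y ν t)
        * (Real.exp (φ y) * ∑ μ, ∑ ν', ginv y μ ν' * ricci Γ y μ ν')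
        = 1/2 * g y ν t * ∑ μ, ∑ ν', ginv y μ ν' * ricci Γ y μ ν' := by
      linear_combination (1/2 * g y ν t * ∑ μ, ∑ ν', ginv y μ ν' * ricci Γ y μ ν') * this
    linarith [h2]
  have hc : (∑ μ, ∑ ν, (Real.exp (φ x) * ginv x μ ν) *
      (pd μ (fun y => einstein g ginv Γ y ν s) x
        - (∑ lam, Γ x lam μ ν * einstein g ginv Γ x lam s)
        - (∑ lam, Γ x lam μ s * einstein g ginv Γ x ν lam))) = 0 := by
    have h0 := G.core x s
    rw [show einstein (Geom.g G) (Geom.ginv G) (Geom.Γ G)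
        = einstein (fun y a b => Real.exp (-φ y) * g y a b)
          (fun y a b => Real.exp (φ y) * ginv y a b) Γ from rfl, hEin] at h0
    exact h0
  rw [show (∑ μ, ∑ ν, (Real.exp (φ x) * ginv x μ ν) *
      (pd μ (fun y => einstein g ginv Γ y ν s) x
        - (∑ lam, Γ x lam μ ν * einstein g ginv Γ x lam s)
        - (∑ lam, Γ x lam μ s * einstein g ginv Γ x ν lam)))
      = Real.exp (φ x) * (∑ μ, ∑ ν, ginv x μ ν *
      (pd μ (fun y => einstein g ginv Γ y ν s) x
        - (∑ lam, Γ x lam μ ν * einstein g ginv Γ x lam s)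
        - (∑ lam, Γ x lam μ s * einstein g ginv Γ x ν lam))) by
    rw [Finset.mul_sum]
    apply Finset.sum_congr rfl; intro μ _
    rw [Finset.mul_sum]
    exact Finset.sum_congr rfl fun ν _ => by ring] at hc
  exact (mul_eq_zero.mp hc).resolve_left (Real.exp_ne_zero _)
end

section
/- On a globally hyperbolic Weyl integrable space-time in an adapted frame, the Gauss constraint expression takes the frame-covariant form G(e₀, e₀) = (N²/2)((K^l_l)² - K^{ij}K_{ij} + R(ḡ, φ̄)), where K is the Weyl extrinsic curvature, R(ḡ, φ̄) is the scalar curvature of the induced Weyl structure on the slice, and N is the lapse; this follows from the Riemannian Gauss equation applied to the Riemannian representative (e^{-φ}g, 0) together with the transformation laws K = e^{φ/2}K', N = e^{φ/2}N'. -/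
open scoped BigOperators

lemma pd_exp_mul {d : ℕ} (a : Fin d) (φ f : (Fin d → ℝ) → ℝ)
    (hφ : ContDiff ℝ (⊤ : ℕ∞) φ) (hf : ContDiff ℝ (⊤ : ℕ∞) f) (x : Fin d → ℝ) :
    pd a (fun y => Real.exp (-(φ y)) * f y) x
      = Real.exp (-(φ x)) * (pd a f x - pd a φ x * f x) := by
  have h1 : HasFDerivAt (fun y => Real.exp (-(φ y)))
      (Real.exp (-(φ x)) • (-(fderiv ℝ φ x))) x :=
    ((hφ.differentiable (by simp) x).hasFDerivAt.neg).exp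
  have h2 := (hf.differentiable (by simp) x).hasFDerivAt
  have h3 : HasFDerivAt (fun y => Real.exp (-(φ y)) * f y) _ x := h1.mul h2
  unfold pd
  rw [h3.fderiv]
  simp only [ContinuousLinearMap.add_apply, ContinuousLinearMap.smul_apply,
    ContinuousLinearMap.neg_apply, smul_eq_mul]
  ring

/-- **Frame-covariant form of the Gauss constraint.**
On a globally hyperbolic Weyl integrable space-time in an adapted frame,
if the Riemannian Gauss equation holds for the Riemannian representative
`(ḡ' = e^{-φ̄}ḡ, 0)` of the induced Weyl structure on the slice, i.e.
`G(e₀,e₀) = (N'²/2)((K'^l_l)² - K'^{ij}K'_{ij} + R(ḡ'))` with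
`N' = e^{-φ̄/2}N` and `K' = e^{-φ̄/2}K`, then the Gauss constraint takes the
frame-covariant form
`G(e₀,e₀) = (N²/2)((K^l_l)² - K^{ij}K_{ij} + R(ḡ, φ̄))`,
where `R(ḡ, φ̄)` is the scalar curvature of the induced Weyl structure,
i.e. of the Weyl connection `Γ̄` of `(ḡ, dφ̄)`. -/
theorem gauss_constraint_frame_covariant (n : ℕ)
    (gbar ginv : (Fin n → ℝ) → Fin n → Fin n → ℝ)
    (φb N : (Fin n → ℝ) → ℝ)
    (K : (Fin n → ℝ) → Fin n → Fin n → ℝ)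
    (Gee0 : (Fin n → ℝ) → ℝ)      -- the value G(e₀,e₀) along the slice
    (Γbar Γ' : (Fin n → ℝ) → Fin n → Fin n → Fin n → ℝ)
    (hg_sym : ∀ x a b, gbar x a b = gbar x b a)
    (hginv_sym : ∀ x a b, ginv x a b = ginv x b a)
    (h_inv : ∀ x a c, (∑ b, ginv x a b * gbar x b c) = if a = c then (1:ℝ) else 0)
    (hg_smooth : ∀ a b, ContDiff ℝ (⊤ : ℕ∞) (fun x => gbar x a b))
    (hφ_smooth : ContDiff ℝ (⊤ : ℕ∞) φb)
    -- Γ̄ is the Weyl connection of the induced Weyl structure (ḡ, dφ̄)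
    (hΓbar_sym : ∀ x u a c, Γbar x u a c = Γbar x u c a)
    (hΓbar_compat : ∀ x a b c,
      pd a (fun y => gbar y b c) x - (∑ u, Γbar x u a b * gbar x u c)
        - (∑ u, Γbar x u a c * gbar x b u) = pd a φb x * gbar x b c)
    -- Γ' is the Levi-Civita connection of the Riemannian representative ḡ' = e^{-φ̄}ḡ
    (hΓ'_sym : ∀ x u a c, Γ' x u a c = Γ' x u c a)
    (hΓ'_metric : ∀ x a b c,
      pd a (fun y => Real.exp (-(φb y)) * gbar y b c) x
        - (∑ u, Γ' x u a b * (Real.exp (-(φb x)) * gbar x u c))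
        - (∑ u, Γ' x u a c * (Real.exp (-(φb x)) * gbar x b u)) = 0)
    -- the Riemannian Gauss equation for (ḡ', K', N') with
    -- ḡ' = e^{-φ̄}ḡ, ginv' = e^{φ̄}ginv, K' = e^{-φ̄/2}K, N' = e^{-φ̄/2}N
    (hGauss : ∀ x,
      Gee0 x = ((Real.exp (-(φb x)/2) * N x)^2 / 2) *
        ((∑ l, ∑ m, (Real.exp (φb x) * ginv x l m)
            * (Real.exp (-(φb x)/2) * K x l m))^2
          - (∑ i, ∑ j, ∑ u, ∑ w, (Real.exp (φb x) * ginv x i u)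
              * (Real.exp (φb x) * ginv x j w)
              * (Real.exp (-(φb x)/2) * K x i j)
              * (Real.exp (-(φb x)/2) * K x u w))
          + (∑ i, ∑ j, (Real.exp (φb x) * ginv x i j) * ricci Γ' x i j))) :
    ∀ x,
      Gee0 x = ((N x)^2 / 2) *
        ((∑ l, ∑ m, ginv x l m * K x l m)^2
          - (∑ i, ∑ j, ∑ u, ∑ w, ginv x i u * ginv x j w * K x i j * K x u w)
          + (∑ i, ∑ j, ginv x i j * ricci Γbar x i j)) := by
  -- Step 1: Γ' satisfies the same compatibility equation as Γbar.
  have hΓ'_compat : ∀ x a b c,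
      pd a (fun y => gbar y b c) x - (∑ u, Γ' x u a b * gbar x u c)
        - (∑ u, Γ' x u a c * gbar x b u) = pd a φb x * gbar x b c := by
    intro x a b c
    have h := hΓ'_metric x a b c
    rw [pd_exp_mul a φb (fun y => gbar y b c) hφ_smooth (hg_smooth b c) x] at h
    have hs1 : ∑ u, Γ' x u a b * (Real.exp (-(φb x)) * gbar x u c)
        = Real.exp (-(φb x)) * ∑ u, Γ' x u a b * gbar x u c := by
      rw [Finset.mul_sum]; exact Finset.sum_congr rfl fun u _ => by ring
    have hs2 : ∑ u, Γ' x u a c * (Real.exp (-(φb x)) * gbar x b u)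
        = Real.exp (-(φb x)) * ∑ u, Γ' x u a c * gbar x b u := by
      rw [Finset.mul_sum]; exact Finset.sum_congr rfl fun u _ => by ring
    rw [hs1, hs2] at h
    have hkey : Real.exp (-(φb x)) *
        ((pd a (fun y => gbar y b c) x - (∑ u, Γ' x u a b * gbar x u c)
          - (∑ u, Γ' x u a c * gbar x b u)) - pd a φb x * gbar x b c) = 0 := by
      linarith [h]
    rcases mul_eq_zero.mp hkey with h' | h'
    · exact absurd h' (Real.exp_ne_zero _)
    · linarith
  -- Step 2: Γbar = Γ' by uniqueness.
  have hΓeq : Γbar = Γ' := by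
    funext x u a c
    set D : Fin n → Fin n → Fin n → ℝ := fun v p q => Γbar x v p q - Γ' x v p q with hD
    set T : Fin n → Fin n → Fin n → ℝ := fun p q r => ∑ v, D v p q * gbar x v r with hT
    have hDsym : ∀ v p q, D v p q = D v q p := by
      intro v p q; simp only [hD, hΓbar_sym x v p q, hΓ'_sym x v p q]
    have hTanti : ∀ p q r, T p q r + T p r q = 0 := by
      intro p q r
      have h1 := hΓbar_compat x p q r
      have h2 := hΓ'_compat x p q r
      have h3 : (∑ v, D v p q * gbar x v r) + (∑ v, D v p r * gbar x q v) = 0 := by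
        have e1 : ∑ v, D v p q * gbar x v r
            = (∑ v, Γbar x v p q * gbar x v r) - (∑ v, Γ' x v p q * gbar x v r) := by
          rw [← Finset.sum_sub_distrib]; exact Finset.sum_congr rfl fun v _ => by
            simp only [hD]; ring
        have e2 : ∑ v, D v p r * gbar x q v
            = (∑ v, Γbar x v p r * gbar x q v) - (∑ v, Γ' x v p r * gbar x q v) := by
          rw [← Finset.sum_sub_distrib]; exact Finset.sum_congr rfl fun v _ => by
            simp only [hD]; ring
        rw [e1, e2]; linarith
      have h5 : ∑ v, D v p r * gbar x v q = ∑ v, D v p r * gbar x q v :=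
        Finset.sum_congr rfl fun v _ => by rw [hg_sym x v q]
      simp only [hT]
      rw [h5]; linarith
    have hTsym : ∀ p q r, T p q r = T q p r := by
      intro p q r
      simp only [hT]; exact Finset.sum_congr rfl fun v _ => by rw [hDsym v p q]
    have hTzero : ∀ p q r, T p q r = 0 := by
      intro p q r
      linarith [hTanti p q r, hTsym p r q, hTanti r p q, hTsym r q p,
        hTanti q r p, hTsym q p r]
    have hDzero : D u a c = 0 := by
      have hc : ∑ r, ginv x u r * T a c r = D u a c := by
        simp only [hT]
        calc ∑ r, ginv x u r * ∑ v, D v a c * gbar x v r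
            = ∑ r, ∑ v, D v a c * (ginv x u r * gbar x r v) := by
              exact Finset.sum_congr rfl fun r _ => by
                rw [Finset.mul_sum]; exact Finset.sum_congr rfl fun v _ => by
                  rw [hg_sym x v r]; ring
          _ = ∑ v, D v a c * ∑ r, ginv x u r * gbar x r v := by
              rw [Finset.sum_comm]
              exact Finset.sum_congr rfl fun v _ => by rw [Finset.mul_sum]
          _ = ∑ v, D v a c * (if u = v then (1:ℝ) else 0) := by
              exact Finset.sum_congr rfl fun v _ => by rw [h_inv x u v]
          _ = D u a c := by simp
      rw [← hc]
      simp [hTzero]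
    have : Γbar x u a c - Γ' x u a c = 0 := hDzero
    linarith
  -- Step 3: algebra with exponentials.
  intro x
  rw [hGauss x, hΓeq]
  have hE1 : Real.exp (φb x) * Real.exp (-(φb x)/2) = Real.exp (φb x / 2) := by
    rw [← Real.exp_add]; ring_nf
  have hE2 : Real.exp (φb x) * Real.exp (φb x) * Real.exp (-(φb x)/2) * Real.exp (-(φb x)/2)
      = Real.exp (φb x) := by
    rw [← Real.exp_add, ← Real.exp_add, ← Real.exp_add]; ring_nf
  have hE3 : Real.exp (φb x / 2) * Real.exp (φb x / 2) = Real.exp (φb x) := by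
    rw [← Real.exp_add]; ring_nf
  have hE4 : Real.exp (-(φb x)/2) * Real.exp (-(φb x)/2) * Real.exp (φb x) = 1 := by
    rw [← Real.exp_add, ← Real.exp_add]; ring_nf; exact Real.exp_zero
  have e1 : ∑ l, ∑ m, (Real.exp (φb x) * ginv x l m) * (Real.exp (-(φb x)/2) * K x l m)
      = Real.exp (φb x / 2) * ∑ l, ∑ m, ginv x l m * K x l m := by
    rw [Finset.mul_sum]
    refine Finset.sum_congr rfl fun l _ => ?_
    rw [Finset.mul_sum]
    refine Finset.sum_congr rfl fun m _ => ?_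
    linear_combination (ginv x l m * K x l m) * hE1
  have e2 : ∑ i, ∑ j, ∑ u, ∑ w, (Real.exp (φb x) * ginv x i u)
        * (Real.exp (φb x) * ginv x j w)
        * (Real.exp (-(φb x)/2) * K x i j)
        * (Real.exp (-(φb x)/2) * K x u w)
      = Real.exp (φb x) * ∑ i, ∑ j, ∑ u, ∑ w,
          ginv x i u * ginv x j w * K x i j * K x u w := by
    rw [Finset.mul_sum]
    refine Finset.sum_congr rfl fun i _ => ?_
    rw [Finset.mul_sum]
    refine Finset.sum_congr rfl fun j _ => ?_
    rw [Finset.mul_sum]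
    refine Finset.sum_congr rfl fun u _ => ?_
    rw [Finset.mul_sum]
    refine Finset.sum_congr rfl fun w _ => ?_
    linear_combination (ginv x i u * ginv x j w * K x i j * K x u w) * hE2
  have e3 : ∑ i, ∑ j, (Real.exp (φb x) * ginv x i j) * ricci Γ' x i j
      = Real.exp (φb x) * ∑ i, ∑ j, ginv x i j * ricci Γ' x i j := by
    rw [Finset.mul_sum]
    refine Finset.sum_congr rfl fun i _ => ?_
    rw [Finset.mul_sum]
    refine Finset.sum_congr rfl fun j _ => ?_
    ring
  rw [e1, e2, e3]
  set S1 := ∑ l, ∑ m, ginv x l m * K x l m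
  set S2 := ∑ i, ∑ j, ∑ u, ∑ w, ginv x i u * ginv x j w * K x i j * K x u w
  set S3 := ∑ i, ∑ j, ginv x i j * ricci Γ' x i j
  have : (Real.exp (φb x / 2) * S1)^2 = Real.exp (φb x) * S1^2 := by
    rw [pow_two, pow_two]; linear_combination (S1 * S1) * hE3
  rw [this]
  linear_combination ((N x)^2 / 2 * (S1^2 - S2 + S3)) * hE4
end

section
/- In an adapted frame on a Weyl integrable space-time, the extrinsic curvature of the slices has the coordinate expression K_{ij}(g, φ) = -(1/(2N))(∂_t g_{ij} - g_{ij} ∂_t φ - e^{φ}(∇_i β_j + ∇_j β_i)), obtained from the Riemannian formula K'_{ij} = -(1/(2N'))(∂_t g'_{ij} - (∇_i β_j + ∇_j β_i)) applied to g' = e^{-φ}g using K = e^{φ/2}K' and N = e^{φ/2}N'. -/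
/-- **Coordinate expression of the extrinsic curvature in an adapted frame.**
On a Weyl integrable space-time `V = M × ℝ` (components written as functions
of the time coordinate `t`, for fixed spatial point), let `g t i j` be the
spatial metric components, `φ` the Weyl scalar field, `N` the lapse, `S t i j`
the components `∇_i β_j` of the covariant derivative of the shift. If the
Riemannian formula `K'_{ij} = -(1/(2N'))(∂_t g'_{ij} - (∇_iβ_j + ∇_jβ_i))`
holds for the Riemannian representative `g' = e^{-φ}g` with `N = e^{φ/2}N'`
and `K = e^{φ/2}K'`, then
`K_{ij}(g,φ) = -(1/(2N))(∂_t g_{ij} - g_{ij} ∂_t φ - e^{φ}(∇_iβ_j + ∇_jβ_i))`. -/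
theorem extrinsic_curvature_coordinate_expression (n : ℕ)
    (g : ℝ → Fin n → Fin n → ℝ) (φ : ℝ → ℝ) (N N' : ℝ → ℝ)
    (S K K' : ℝ → Fin n → Fin n → ℝ)
    (hg_diff : ∀ i j, Differentiable ℝ (fun t => g t i j))
    (hφ_diff : Differentiable ℝ φ)
    (hN : ∀ t, N t = Real.exp (φ t / 2) * N' t)
    (hN' : ∀ t, N' t ≠ 0)
    (hK : ∀ t i j, K t i j = Real.exp (φ t / 2) * K' t i j)
    (hK' : ∀ t i j, K' t i j =
      -(1/(2 * N' t)) *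
        (deriv (fun s => Real.exp (-(φ s)) * g s i j) t - (S t i j + S t j i))) :
    ∀ t i j, K t i j =
      -(1/(2 * N t)) *
        (deriv (fun s => g s i j) t - g t i j * deriv φ t
          - Real.exp (φ t) * (S t i j + S t j i)) := by
  intro t i j
  have hd : deriv (fun s => Real.exp (-(φ s)) * g s i j) t
      = Real.exp (-(φ t)) * (deriv (fun s => g s i j) t - g t i j * deriv φ t) := by
    have h1 : Differentiable ℝ (fun s => Real.exp (-(φ s))) :=
      (hφ_diff.neg).exp
    rw [deriv_fun_mul (h1 t) (hg_diff i j t)]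
    have h2 : deriv (fun s => Real.exp (-(φ s))) t
        = Real.exp (-(φ t)) * (-(deriv φ t)) := by
      have := (Real.differentiable_exp.comp (hφ_diff.neg)).differentiableAt (x := t)
      rw [show (fun s => Real.exp (-(φ s))) = Real.exp ∘ (fun s => -(φ s)) from rfl,
        deriv_comp _ (Real.differentiable_exp _) ((hφ_diff.fun_neg) t),
        Real.deriv_exp, deriv.fun_neg]
    rw [h2]; ring
  have heφ : Real.exp (φ t) = Real.exp (φ t / 2) * Real.exp (φ t / 2) := by
    rw [← Real.exp_add]; ring_nf
  have hne : Real.exp (φ t / 2) ≠ 0 := Real.exp_ne_zero _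
  have hinv : Real.exp (-(φ t)) * Real.exp (φ t) = 1 := by
    rw [← Real.exp_add]; simp
  have hneg : Real.exp (-(φ t)) = (Real.exp (φ t / 2) * Real.exp (φ t / 2))⁻¹ := by
    rw [← heφ, ← Real.exp_neg]
  rw [hK, hK', hd, hN, hneg, heφ]
  have hn := hN' t
  obtain ⟨a, ha⟩ : ∃ a, Real.exp (φ t / 2) = a := ⟨_, rfl⟩
  rw [ha] at heφ hne ⊢
  field_simp
end

section
/- Given a solution (g, φ) of the reduced system, the Einstein tensor satisfies G_{αβ} - T_{αβ} = (1/2)(g_{αλ}D_β F^λ + g_{βλ}D_α F^λ - g_{αβ}D_λ F^λ); consequently, if F|_{t=0} = 0 on the initial slice, then ∂_t F(·,0) = 0 holds if and only if the constraint equations (G_{α0} - T_{α0})|_{t=0} = 0 are satisfied. -/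
open scoped BigOperators

/-- Background (`ê`-) covariant derivative `D_β F^λ` of a vector field `F`,
with respect to the fixed background connection `Γ̂`. -/
noncomputable def covD {d : ℕ}
    (Γhat : (Fin d → ℝ) → Fin d → Fin d → Fin d → ℝ)
    (F : (Fin d → ℝ) → Fin d → ℝ) (x : Fin d → ℝ) (β lam : Fin d) : ℝ :=
  pd β (fun y => F y lam) x + ∑ μ, Γhat x lam β μ * F x μ

/-- **Gauge propagation lemma.**
On `V = M × ℝ` (coordinates `x : Fin (n+1) → ℝ`, time coordinate `x 0`,
initial slice `x 0 = 0`), suppose `(g, φ)` solves the reduced system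
(`^rG_{αβ} = T_{αβ}`), with the decomposition
`G_{αβ} = {}^rG_{αβ} + ½(g_{αλ}D_βF^λ + g_{βλ}D_αF^λ - g_{αβ}D_λF^λ)`.
Then `G_{αβ} - T_{αβ} = ½(g_{αλ}D_βF^λ + g_{βλ}D_αF^λ - g_{αβ}D_λF^λ)`;
consequently, if `F|_{t=0} = 0` (and `N|_{t=0} = 1`, `β|_{t=0} = 0`, i.e.
`g_{00}|_{t=0} = -1`, `g_{0i}|_{t=0} = 0`), then `∂_t F(·,0) = 0` holds
if and only if the constraints `(G_{α0} - T_{α0})|_{t=0} = 0` hold. -/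
theorem gauge_propagation (n : ℕ)
    (g ginv : (Fin (n+1) → ℝ) → Fin (n+1) → Fin (n+1) → ℝ)
    (G T rG : (Fin (n+1) → ℝ) → Fin (n+1) → Fin (n+1) → ℝ)
    (F : (Fin (n+1) → ℝ) → Fin (n+1) → ℝ)
    (Γhat : (Fin (n+1) → ℝ) → Fin (n+1) → Fin (n+1) → Fin (n+1) → ℝ)
    (hg_sym : ∀ x a b, g x a b = g x b a)
    (h_inv : ∀ x a c, (∑ b, ginv x a b * g x b c) = if a = c then (1:ℝ) else 0)
    (hF_smooth : ∀ lam, Differentiable ℝ (fun x => F x lam))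
    -- lapse N = 1 and shift β = 0 on the initial slice
    (hlapse : ∀ x, x 0 = 0 → g x 0 0 = -1)
    (hshift : ∀ x, x 0 = 0 → ∀ i, i ≠ 0 → g x 0 i = 0)
    -- decomposition of the Einstein tensor
    (hdecomp : ∀ x α β, G x α β = rG x α β +
      (1/2) * ((∑ lam, g x α lam * covD Γhat F x β lam)
        + (∑ lam, g x β lam * covD Γhat F x α lam)
        - g x α β * (∑ lam, covD Γhat F x lam lam)))
    -- (g, φ) solves the reduced system: ^rG = T
    (hreduced : ∀ x α β, rG x α β = T x α β)
    -- the gauge condition holds initially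
    (hF0 : ∀ x, x 0 = 0 → ∀ lam, F x lam = 0) :
    (∀ x α β, G x α β - T x α β =
      (1/2) * ((∑ lam, g x α lam * covD Γhat F x β lam)
        + (∑ lam, g x β lam * covD Γhat F x α lam)
        - g x α β * (∑ lam, covD Γhat F x lam lam))) ∧
    ((∀ x, x 0 = 0 → ∀ lam, pd 0 (fun y => F y lam) x = 0) ↔
      (∀ x, x 0 = 0 → ∀ α, G x α 0 - T x α 0 = 0)) := by
  have hpart1 : ∀ x α β, G x α β - T x α β =
      (1/2) * ((∑ lam, g x α lam * covD Γhat F x β lam)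
        + (∑ lam, g x β lam * covD Γhat F x α lam)
        - g x α β * (∑ lam, covD Γhat F x lam lam)) := by
    intro x α β
    rw [hdecomp, hreduced]; ring
  -- tangential derivatives of F vanish on the initial slice
  have htan : ∀ x : Fin (n+1) → ℝ, x 0 = 0 → ∀ i : Fin (n+1), i ≠ 0 →
      ∀ lam, pd i (fun y => F y lam) x = 0 := by
    intro x hx i hi lam
    set v : Fin (n+1) → ℝ := Pi.single i 1 with hv
    have hcurve : HasDerivAt (fun t : ℝ => x + t • v) v 0 := by
      have h1 : HasDerivAt (fun t : ℝ => t • v) ((1:ℝ) • v) 0 :=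
        (hasDerivAt_id 0).smul_const v
      simpa using h1.const_add x
    have hf : HasFDerivAt (fun y => F y lam) (fderiv ℝ (fun y => F y lam) x) x :=
      (hF_smooth lam x).hasFDerivAt
    have hf' : HasFDerivAt (fun y => F y lam) (fderiv ℝ (fun y => F y lam) x)
        ((fun t : ℝ => x + t • v) 0) := by simpa using hf
    have hcomp : HasDerivAt (fun t : ℝ => F (x + t • v) lam)
        (fderiv ℝ (fun y => F y lam) x v) 0 := HasFDerivAt.comp_hasDerivAt (f := fun t : ℝ => x + t • v) 0 hf' hcurve
    have hzero : (fun t : ℝ => F (x + t • v) lam) = fun _ => (0:ℝ) := by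
      funext t
      apply hF0
      have hv0 : v 0 = 0 := Pi.single_eq_of_ne (Ne.symm hi) 1
      simp [hx, hv0]
    rw [hzero] at hcomp
    have h0 : fderiv ℝ (fun y => F y lam) x v = 0 :=
      hcomp.unique (hasDerivAt_const 0 0)
    simpa [pd, hv] using h0
  refine ⟨hpart1, ?_⟩
  constructor
  · -- ∂_t F = 0 ⇒ constraints
    intro h x hx α
    have hcovz : ∀ β lam, covD Γhat F x β lam = 0 := by
      intro β lam
      by_cases hβ : β = 0
      · subst hβ
        simp [covD, hF0 x hx, h x hx lam]
      · simp [covD, hF0 x hx, htan x hx β hβ lam]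
    rw [hpart1]
    simp [hcovz]
  · -- constraints ⇒ ∂_t F = 0
    intro h x hx lam
    set p : Fin (n+1) → ℝ := fun μ => pd 0 (fun y => F y μ) x with hp
    have hcov0 : ∀ β lam, covD Γhat F x β lam = if β = 0 then p lam else 0 := by
      intro β lam
      by_cases hβ : β = 0
      · subst hβ; simp [covD, hF0 x hx, hp]
      · simp [covD, hF0 x hx, htan x hx β hβ lam, hβ]
    have hg0 : ∀ lam, g x 0 lam = if lam = 0 then -1 else 0 := by
      intro lam
      by_cases hl : lam = 0
      · simp [hl, hlapse x hx]
      · simp [hl, hshift x hx lam hl]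
    have hS3 : (∑ lam, covD Γhat F x lam lam) = p 0 := by
      simp [hcov0]
    have hkey : ∀ α, (∑ lam, g x α lam * p lam) = 0 := by
      have hp0 : p 0 = 0 := by
        have E : (1/2) * ((∑ lam, g x 0 lam * covD Γhat F x 0 lam)
            + (∑ lam, g x 0 lam * covD Γhat F x 0 lam)
            - g x 0 0 * (∑ lam, covD Γhat F x lam lam)) = 0 :=
          (hpart1 x 0 0).symm.trans (h x hx 0)
        have hS : (∑ lam, g x 0 lam * covD Γhat F x 0 lam) = - p 0 := by
          simp [hcov0, hg0]
        rw [hS, hS3, hlapse x hx] at E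
        linarith
      intro α
      by_cases hα : α = 0
      · subst hα
        simp [hg0, hp0]
      · have E : (1/2) * ((∑ lam, g x α lam * covD Γhat F x 0 lam)
            + (∑ lam, g x 0 lam * covD Γhat F x α lam)
            - g x α 0 * (∑ lam, covD Γhat F x lam lam)) = 0 :=
          (hpart1 x α 0).symm.trans (h x hx α)
        have hS1 : (∑ lam, g x α lam * covD Γhat F x 0 lam)
            = ∑ lam, g x α lam * p lam := by simp [hcov0]
        have hS2 : (∑ lam, g x 0 lam * covD Γhat F x α lam) = 0 := by
          simp [hcov0, hα]
        have hgα0 : g x α 0 = 0 := by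
          rw [hg_sym]; exact hshift x hx α hα
        rw [hS1, hS2, hS3, hgα0] at E
        linarith
    show p lam = 0
    have step1 : p lam = ∑ c, (if lam = c then (1:ℝ) else 0) * p c := by
      simp
    have step2 : (∑ c, (∑ b, ginv x lam b * g x b c) * p c)
        = ∑ b, ginv x lam b * ∑ c, g x b c * p c := by
      simp_rw [Finset.sum_mul, Finset.mul_sum, mul_assoc]
      exact Finset.sum_comm
    calc p lam = ∑ c, (if lam = c then (1:ℝ) else 0) * p c := step1
      _ = ∑ c, (∑ b, ginv x lam b * g x b c) * p c := by simp_rw [h_inv]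
      _ = ∑ b, ginv x lam b * ∑ c, g x b c * p c := step2
      _ = 0 := by simp [hkey]
end
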